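/- arXiv:math/0411181 — 7 statements merged into one kernel-verified Lean document; each statement's English description precedes it below -/
import Mathlib

section
/- Let G be a finite simple graph with no induced 4-cycle, i.e., there is no 4-element subset S of the vertices such that the induced subgraph G[S] is isomorphic to the cycle C_4. Then for every integer i ≥ 0, B_i(G) = Σ_{v ∈ V} C(deg v, i+1) − k_{i+2}(G). -/
open Finset SimpleGraph

section Aux

lemma isolated_reachable' {W : Type*} {H : SimpleGraph W} {u v : W}
    (hu : ∀ x, ¬ H.Adj u x) (h : H.Reachable u v) : u = v := by
  obtain ⟨w⟩ := h
  cases w with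
  | nil => rfl
  | cons h p => exact absurd h (hu _)

lemma count_components' {W : Type*} [Fintype W] [DecidableEq W] (H : SimpleGraph W)
    [DecidableRel H.Adj]
    (hconn : ∀ u v : W, (∃ x, H.Adj u x) → (∃ x, H.Adj v x) → H.Reachable u v) :
    Nat.card H.ConnectedComponent =
      (univ.filter fun v => ∀ x, ¬ H.Adj v x).card +
        (if ∃ v : W, ∃ x, H.Adj v x then 1 else 0) := by
  classical
  have hsurj : Function.Surjective H.connectedComponentMk :=
    SimpleGraph.ConnectedComponent.ind (fun v => ⟨v, rfl⟩)
  have h1 : Nat.card H.ConnectedComponent = (univ.image H.connectedComponentMk).card := by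
    rw [Finset.image_univ_of_surjective hsurj, Nat.card_eq_fintype_card, Finset.card_univ]
  set I : Finset W := univ.filter fun v => ∀ x, ¬ H.Adj v x with hI
  have hunion : (univ : Finset W) = I ∪ Iᶜ := by simp
  rw [h1, hunion, Finset.image_union, Finset.card_union_of_disjoint]
  · congr 1
    · apply Finset.card_image_of_injOn
      intro a ha b hb hab
      simp only [hI, Finset.mem_filter, Finset.mem_coe] at ha
      exact isolated_reachable' ha.2 ((SimpleGraph.ConnectedComponent.eq).1 hab)
    · by_cases h : ∃ v : W, ∃ x, H.Adj v x
      · obtain ⟨v, hv⟩ := h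
        have hvmem : v ∈ Iᶜ := by simp [hI, hv]
        rw [if_pos ⟨v, hv⟩]
        have : Iᶜ.image H.connectedComponentMk = {H.connectedComponentMk v} := by
          apply Finset.eq_singleton_iff_nonempty_unique_mem.2
          constructor
          · exact ⟨_, Finset.mem_image_of_mem _ hvmem⟩
          · intro c hc
            obtain ⟨u, hu, rfl⟩ := Finset.mem_image.1 hc
            simp only [hI, Finset.mem_compl, Finset.mem_filter, Finset.mem_univ, true_and,
              not_forall, not_not] at hu
            exact SimpleGraph.ConnectedComponent.eq.2
              (hconn u v (by simpa using hu) hv)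
        rw [this, Finset.card_singleton]
      · rw [if_neg h]
        have : Iᶜ = ∅ := by
          ext u
          simp only [hI, Finset.mem_compl, Finset.mem_filter, Finset.mem_univ, true_and,
            Finset.notMem_empty, iff_false, not_not]
          intro x hx
          exact h ⟨u, x, hx⟩
        simp [this]
  · rw [Finset.disjoint_left]
    rintro c hc hc'
    obtain ⟨a, ha, rfl⟩ := Finset.mem_image.1 hc
    obtain ⟨b, hb, hba⟩ := Finset.mem_image.1 hc'
    simp only [hI, Finset.mem_filter, Finset.mem_univ, true_and] at ha
    simp only [hI, Finset.mem_compl, Finset.mem_filter, Finset.mem_univ, true_and,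
      not_forall, not_not] at hb
    obtain ⟨x, hx⟩ := hb
    have := isolated_reachable' ha (SimpleGraph.ConnectedComponent.eq.1 hba.symm)
    subst this
    exact ha _ hx

def quadMap' {α : Type*} (x0 x1 x2 x3 : α) : Fin 4 → α
  | 0 => x0
  | 1 => x1
  | 2 => x2
  | 3 => x3

lemma induced_C4' {V : Type*} [DecidableEq V] (G : SimpleGraph V) {a b c d : V}
    (hab : G.Adj a b) (hbc : G.Adj b c) (hcd : G.Adj c d) (hda : G.Adj d a)
    (hac : ¬ G.Adj a c) (hbd : ¬ G.Adj b d) (hac' : a ≠ c) (hbd' : b ≠ d) :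
    ∃ S : Finset V, S.card = 4 ∧
      Nonempty (G.induce (S : Set V) ≃g SimpleGraph.cycleGraph 4) := by
  have hab' : a ≠ b := hab.ne
  have hbc' : b ≠ c := hbc.ne
  have hcd' : c ≠ d := hcd.ne
  have had' : a ≠ d := hda.ne'
  have hba : G.Adj b a := hab.symm
  have hcb : G.Adj c b := hbc.symm
  have hdc : G.Adj d c := hcd.symm
  have had : G.Adj a d := hda.symm
  have hca : ¬ G.Adj c a := fun h => hac h.symm
  have hdb : ¬ G.Adj d b := fun h => hbd h.symm
  have hcardS : ({a, b, c, d} : Finset V).card = 4 := by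
    rw [Finset.card_insert_of_notMem (by simp [hab', hac', had']),
      Finset.card_insert_of_notMem (by simp [hbc', hbd']),
      Finset.card_insert_of_notMem (by simp [hcd']), Finset.card_singleton]
  refine ⟨{a, b, c, d}, hcardS, ?_⟩
  set S : Finset V := {a, b, c, d} with hS
  let f : Fin 4 → ((S : Set V)) :=
    quadMap' ⟨a, by simp [hS]⟩ ⟨b, by simp [hS]⟩ ⟨c, by simp [hS]⟩ ⟨d, by simp [hS]⟩
  have hinj : Function.Injective f := by
    intro i j hij
    fin_cases i <;> fin_cases j <;> first
      | rfl
      | (exfalso; revert hij;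
         simp_all [f, quadMap', Subtype.ext_iff, hab', hbc', hcd', had', hac', hbd',
           hab'.symm, hbc'.symm, hcd'.symm, had'.symm, hac'.symm, hbd'.symm])
  have hcard : Fintype.card ((S : Set V)) = 4 := by
    simp only [Finset.coe_sort_coe, Fintype.card_coe]
    exact hcardS
  have hbij : Function.Bijective f := by
    rw [Fintype.bijective_iff_injective_and_card]
    exact ⟨hinj, by rw [hcard, Fintype.card_fin]⟩
  exact ⟨(⟨Equiv.ofBijective f hbij, by
    intro i j
    simp only [Equiv.ofBijective_apply]
    fin_cases i <;> fin_cases j <;>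
      simp (config := { decide := true }) [f, quadMap', SimpleGraph.comap_adj,
        Function.Embedding.coe_subtype, SimpleGraph.cycleGraph_adj, Fin.ext_iff,
        hab, hbc, hcd, hda, hba, hcb, hdc, had, hac, hbd, hca, hdb, G.irrefl] <;>
      first
        | exact hab | exact hba | exact hbc | exact hcb | exact hcd | exact hdc
        | exact hda | exact had | exact hac | exact hbd | exact hca | exact hdb⟩ :
      SimpleGraph.cycleGraph 4 ≃g G.induce (S : Set V)).symm⟩

lemma Hadj_iff' {V : Type*} (G : SimpleGraph V) (s : Set V) (u v : s) :
    ((G.induce s)ᶜ).Adj u v ↔ u ≠ v ∧ ¬ G.Adj ↑u ↑v := by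
  rw [compl_adj]
  exact Iff.rfl

lemma reachable_of_nonisolated' {V : Type*} [Fintype V] [DecidableEq V] (G : SimpleGraph V)
    [DecidableRel G.Adj]
    (h4 : ∀ S : Finset V, S.card = 4 →
      ¬ Nonempty (G.induce (S : Set V) ≃g SimpleGraph.cycleGraph 4)) (S : Finset V)
    (u v : ((S : Set V))) (hu : ∃ x, ((G.induce (S : Set V))ᶜ).Adj u x)
    (hv : ∃ x, ((G.induce (S : Set V))ᶜ).Adj v x) :
    ((G.induce (S : Set V))ᶜ).Reachable u v := by
  set H := (G.induce (S : Set V))ᶜ with hH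
  obtain ⟨u', hu'⟩ := hu
  obtain ⟨v', hv'⟩ := hv
  obtain ⟨huu', hGuu'⟩ := (Hadj_iff' G _ u u').1 hu'
  obtain ⟨hvv', hGvv'⟩ := (Hadj_iff' G _ v v').1 hv'
  by_cases huv : u = v
  · exact huv ▸ Reachable.refl u
  by_cases hGuv : G.Adj ↑u ↑v
  swap
  · exact ((Hadj_iff' G _ u v).2 ⟨huv, hGuv⟩).reachable
  by_cases h1 : G.Adj ↑u ↑v'
  swap
  · by_cases huv' : u = v'
    · subst huv'
      exact hv'.symm.reachable
    · exact ((Hadj_iff' G _ u v').2 ⟨huv', h1⟩).reachable.trans hv'.symm.reachable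
  by_cases h2 : G.Adj ↑u' ↑v
  swap
  · by_cases hu'v : u' = v
    · exact (hu'v ▸ hu' : H.Adj u v).reachable
    · exact hu'.reachable.trans ((Hadj_iff' G _ u' v).2 ⟨hu'v, h2⟩).reachable
  by_cases h3 : G.Adj ↑u' ↑v'
  swap
  · by_cases hu'v' : u' = v'
    · exact hu'.reachable.trans (hu'v' ▸ hv'.symm.reachable)
    · exact hu'.reachable.trans
        (((Hadj_iff' G _ u' v').2 ⟨hu'v', h3⟩).reachable.trans hv'.symm.reachable)
  · exfalso
    obtain ⟨T, hT, hiso⟩ := induced_C4' G hGuv h2.symm h3 h1.symm hGuu' hGvv'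
      (fun h => huu' (Subtype.coe_injective h)) (fun h => hvv' (Subtype.coe_injective h))
    exact h4 T hT hiso

end Aux

open Finset

/-- The `i`-th Betti number in the linear strand of the edge ideal of `G`:
`B_i(G) = Σ_{S ⊆ V, |S| = i+2} (#components of the complement of G[S] − 1)`. -/
noncomputable def linStrand {V : Type*} [Fintype V] [DecidableEq V]
    (G : SimpleGraph V) (i : ℕ) : ℕ :=
  ∑ S ∈ (Finset.univ : Finset V).powersetCard (i + 2),
    (Nat.card ((G.induce (S : Set V))ᶜ.ConnectedComponent) - 1)

section Key

variable {V : Type*} [Fintype V] [DecidableEq V] (G : SimpleGraph V) [DecidableRel G.Adj]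

lemma key_count (h4 : ∀ S : Finset V, S.card = 4 →
      ¬ Nonempty (G.induce (S : Set V) ≃g SimpleGraph.cycleGraph 4))
    (S : Finset V) (hS : S.Nonempty) :
    (Nat.card ((G.induce (S : Set V))ᶜ.ConnectedComponent) : ℤ) - 1 =
      ((S.filter fun v => ∀ w ∈ S, w ≠ v → G.Adj v w).card : ℤ) -
        (if G.IsClique (S : Set V) then 1 else 0) := by
  classical
  set H := (G.induce (S : Set V))ᶜ with hH
  haveI : DecidableRel H.Adj := fun u v => Classical.dec _
  rw [count_components' H (reachable_of_nonisolated' G h4 S)]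
  have hfilter : (univ.filter fun v : ((S : Set V)) => ∀ x, ¬ H.Adj v x).card =
      (S.filter fun v => ∀ w ∈ S, w ≠ v → G.Adj v w).card := by
    refine Finset.card_bij (fun v _ => (v : V)) ?_ ?_ ?_
    · intro v hv
      simp only [Finset.mem_filter, Finset.mem_univ, true_and] at hv
      simp only [Finset.mem_filter]
      refine ⟨v.2, fun w hw hwv => ?_⟩
      have := hv ⟨w, hw⟩
      rw [Hadj_iff'] at this
      push_neg at this
      by_cases hvw : v = (⟨w, hw⟩ : ((S : Set V)))
      · exact absurd (congrArg Subtype.val hvw).symm hwv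
      · exact this hvw
    · intro a ha b hb hab
      exact Subtype.coe_injective hab
    · intro w hw
      simp only [Finset.mem_filter] at hw
      refine ⟨⟨w, hw.1⟩, ?_, rfl⟩
      simp only [Finset.mem_filter, Finset.mem_univ, true_and]
      intro x hx
      rw [Hadj_iff'] at hx
      obtain ⟨hne, hnadj⟩ := hx
      by_cases hxw : (x : V) = w
      · exact hne (Subtype.ext hxw.symm)
      · exact hnadj (hw.2 x x.2 hxw)
  have hclique : (∃ v : ((S : Set V)), ∃ x, H.Adj v x) ↔ ¬ G.IsClique (S : Set V) := by
    constructor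
    · rintro ⟨v, x, hvx⟩ hcl
      rw [Hadj_iff'] at hvx
      exact hvx.2 (hcl v.2 x.2 (fun h => hvx.1 (Subtype.ext h)))
    · intro hcl
      by_contra hne
      apply hcl
      intro a ha b hb hab
      by_contra hnadj
      exact hne ⟨⟨a, ha⟩, ⟨b, hb⟩,
        (Hadj_iff' G _ _ _).2 ⟨fun h => hab (congrArg Subtype.val h), hnadj⟩⟩
  rw [hfilter]
  by_cases h : G.IsClique (S : Set V)
  · rw [if_pos h, if_neg (fun hx => (hclique.1 hx) h)]
    push_cast
    ring
  · rw [if_neg h, if_pos (hclique.2 h)]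
    push_cast
    ring

lemma nat_card_pos (S : Finset V) (hS : S.Nonempty) :
    1 ≤ Nat.card ((G.induce (S : Set V))ᶜ.ConnectedComponent) := by
  obtain ⟨v, hv⟩ := hS
  haveI : Nonempty ((S : Set V)) := ⟨⟨v, hv⟩⟩
  haveI : Nonempty ((G.induce (S : Set V))ᶜ.ConnectedComponent) :=
    ⟨(G.induce (S : Set V))ᶜ.connectedComponentMk (Classical.arbitrary _)⟩
  exact Nat.one_le_iff_ne_zero.2 (Nat.card_ne_zero.2 ⟨this, inferInstance⟩)

lemma dominating_count (v : V) (i : ℕ) :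
    ((univ.powersetCard (i + 2)).filter
      (fun S => v ∈ S ∧ ∀ w ∈ S, w ≠ v → G.Adj v w)).card =
      (G.degree v).choose (i + 1) := by
  classical
  rw [← SimpleGraph.card_neighborFinset_eq_degree, ← Finset.card_powersetCard]
  apply Finset.card_bij (fun S _ => S.erase v)
  · intro S hS
    simp only [Finset.mem_filter, Finset.mem_powersetCard] at hS
    obtain ⟨⟨_, hcard⟩, hv, hdom⟩ := hS
    rw [Finset.mem_powersetCard]
    constructor
    · intro w hw
      rw [Finset.mem_erase] at hw
      rw [SimpleGraph.mem_neighborFinset]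
      exact hdom w hw.2 hw.1
    · rw [Finset.card_erase_of_mem hv, hcard]
      omega
  · intro S hS T hT hST
    simp only [Finset.mem_filter, Finset.mem_powersetCard] at hS hT
    rw [← Finset.insert_erase hS.2.1, ← Finset.insert_erase hT.2.1, hST]
  · intro T hT
    rw [Finset.mem_powersetCard] at hT
    have hvT : v ∉ T := fun h => G.irrefl ((SimpleGraph.mem_neighborFinset G v v).1 (hT.1 h))
    refine ⟨insert v T, ?_, ?_⟩
    · simp only [Finset.mem_filter, Finset.mem_powersetCard]
      refine ⟨⟨Finset.subset_univ _, ?_⟩, Finset.mem_insert_self v T, ?_⟩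
      · rw [Finset.card_insert_of_notMem hvT, hT.2]
      · intro w hw hwv
        rcases Finset.mem_insert.1 hw with h | h
        · exact absurd h hwv
        · exact (SimpleGraph.mem_neighborFinset G v w).1 (hT.1 h)
    · rw [Finset.erase_insert hvT]

end Key

/-- If a finite simple graph `G` has no induced 4-cycle, then for every `i ≥ 0`,
`B_i(G) = Σ_{v ∈ V} C(deg v, i+1) − k_{i+2}(G)`. -/
theorem linStrand_of_no_induced_four_cycle
    {V : Type*} [Fintype V] [DecidableEq V] (G : SimpleGraph V) [DecidableRel G.Adj]
    (h4 : ∀ S : Finset V, S.card = 4 →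
      ¬ Nonempty (G.induce (S : Set V) ≃g SimpleGraph.cycleGraph 4)) (i : ℕ) :
    (linStrand G i : ℤ) =
      ∑ v : V, ((G.degree v).choose (i + 1) : ℤ) - (G.cliqueFinset (i + 2)).card := by
  classical
  rw [linStrand, Nat.cast_sum]
  have key : ∀ S ∈ (univ : Finset V).powersetCard (i + 2),
      ((Nat.card ((G.induce (S : Set V))ᶜ.ConnectedComponent) - 1 : ℕ) : ℤ) =
        ((S.filter fun v => ∀ w ∈ S, w ≠ v → G.Adj v w).card : ℤ) -
          (if G.IsClique (S : Set V) then 1 else 0) := by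
    intro S hS
    rw [Finset.mem_powersetCard] at hS
    have hne : S.Nonempty := Finset.card_pos.1 (by omega)
    rw [Nat.cast_sub (nat_card_pos G S hne), Nat.cast_one]
    exact key_count G h4 S hne
  rw [Finset.sum_congr rfl key, Finset.sum_sub_distrib]
  congr 1
  · have step1 : ∀ S : Finset V,
        ((S.filter fun v => ∀ w ∈ S, w ≠ v → G.Adj v w).card : ℤ) =
          ∑ v ∈ (univ : Finset V),
            (if v ∈ S ∧ ∀ w ∈ S, w ≠ v → G.Adj v w then (1 : ℤ) else 0) := by
      intro S
      have : S.filter (fun v => ∀ w ∈ S, w ≠ v → G.Adj v w) =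
          (univ : Finset V).filter (fun v => v ∈ S ∧ ∀ w ∈ S, w ≠ v → G.Adj v w) := by
        ext x
        simp [and_comm]
      rw [this, Finset.card_filter]
      push_cast
      rfl
    calc ∑ S ∈ (univ : Finset V).powersetCard (i + 2),
          ((S.filter fun v => ∀ w ∈ S, w ≠ v → G.Adj v w).card : ℤ)
        = ∑ S ∈ (univ : Finset V).powersetCard (i + 2), ∑ v ∈ (univ : Finset V),
            (if v ∈ S ∧ ∀ w ∈ S, w ≠ v → G.Adj v w then (1 : ℤ) else 0) := by
          exact Finset.sum_congr rfl fun S _ => step1 S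
      _ = ∑ v ∈ (univ : Finset V), ∑ S ∈ (univ : Finset V).powersetCard (i + 2),
            (if v ∈ S ∧ ∀ w ∈ S, w ≠ v → G.Adj v w then (1 : ℤ) else 0) :=
          Finset.sum_comm
      _ = ∑ v : V, ((G.degree v).choose (i + 1) : ℤ) := by
          refine Finset.sum_congr rfl fun v _ => ?_
          rw [Finset.sum_boole, ← dominating_count G v i]
  · have : ((univ : Finset V).powersetCard (i + 2)).filter
        (fun S : Finset V => G.IsClique (S : Set V)) = G.cliqueFinset (i + 2) := by
      ext S
      simp only [Finset.mem_filter, Finset.mem_powersetCard, SimpleGraph.mem_cliqueFinset_iff,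
        SimpleGraph.isNClique_iff]
      constructor
      · rintro ⟨⟨_, hc⟩, hcl⟩
        exact ⟨hcl, hc⟩
      · rintro ⟨hcl, hc⟩
        exact ⟨⟨Finset.subset_univ _, hc⟩, hcl⟩
    rw [Finset.sum_boole, this]
end

section
/- For every finite simple graph G, B_1(G) = Σ_{v ∈ V} C(deg v, 2) − k_3(G); that is, the first linear-strand Betti number equals the sum over all vertices of (deg v choose 2) minus the number of triangles of G. -/
/-!
For a 3-set `S`, `c(Ḡ[S]) - 1` is `0, 0, 1, 2` according as `G[S]` has `0, 1, 2, 3` edges. This is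
the number of vertices of `S` adjacent to the two others, minus `1` if `S` is a triangle: a finite
check on the eight graphs on `Fin 3`. Summed over all 3-sets, the first term counts the pairs
`(v, {u, w})` with `u, w` neighbours of `v`, that is `∑ v, C(deg v, 2)`, and the second counts the
triangles.
-/

open Finset

namespace SimpleGraph

def Iso.compl {V W : Type*} {G : SimpleGraph V} {H : SimpleGraph W} (φ : G ≃g H) :
    Gᶜ ≃g Hᶜ where
  toEquiv := φ.toEquiv
  map_rel_iff' := by simp [compl_adj, φ.map_adj_iff]

def graphOnThree (p q r : Bool) : SimpleGraph (Fin 3) :=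
  fromRel fun i j => (i, j) = (0, 1) ∧ p ∨ (i, j) = (0, 2) ∧ q ∨ (i, j) = (1, 2) ∧ r

instance (p q r : Bool) : DecidableRel (graphOnThree p q r).Adj := by
  unfold graphOnThree; infer_instance

lemma card_connectedComponent_compl_graphOnThree (p q r : Bool) :
    Nat.card (graphOnThree p q r)ᶜ.ConnectedComponent - 1 + (if p ∧ q ∧ r then 1 else 0) =
      (if p ∧ q then 1 else 0) + (if p ∧ r then 1 else 0) + (if q ∧ r then 1 else 0) := by
  rw [Nat.card_eq_fintype_card]
  revert p q r
  decide

variable {V : Type*} (G : SimpleGraph V)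

lemma comap_vecCons_eq_graphOnThree [DecidableRel G.Adj] (a b c : V) :
    G.comap ![a, b, c] = graphOnThree (G.Adj a b) (G.Adj a c) (G.Adj b c) := by
  ext i j
  fin_cases i <;> fin_cases j <;> simp [graphOnThree, G.adj_comm]

variable [DecidableEq V]

lemma card_connectedComponent_compl_induce_triple {a b c : V}
    (hab : a ≠ b) (hac : a ≠ c) (hbc : b ≠ c) :
    Nat.card (G.induce ({a, b, c} : Finset V))ᶜ.ConnectedComponent =
      Nat.card (G.comap ![a, b, c])ᶜ.ConnectedComponent := by
  let f : Fin 3 ↪ V := ⟨![a, b, c], by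
    intro i j
    fin_cases i <;> fin_cases j <;> simp [hab, hac, hbc, hab.symm, hac.symm, hbc.symm]⟩
  have hrange : Set.range ![a, b, c] = (({a, b, c} : Finset V) : Set V) := by
    simp only [Matrix.range_cons, Matrix.range_empty, Set.union_empty, coe_insert, coe_singleton,
      Set.singleton_union]
  rw [← hrange]
  exact Nat.card_congr (Embedding.comap f G).isoInduceRange.compl.connectedComponentEquiv.symm

variable [DecidableRel G.Adj]

def universalVertsIn (S : Finset V) : Finset V :=
  {v ∈ S | ∀ w ∈ S, w ≠ v → G.Adj v w}

lemma card_universalVertsIn_triple {a b c : V} (hab : a ≠ b) (hac : a ≠ c) (hbc : b ≠ c) :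
    #(G.universalVertsIn {a, b, c}) = (if G.Adj a b ∧ G.Adj a c then 1 else 0) +
      (if G.Adj a b ∧ G.Adj b c then 1 else 0) + (if G.Adj a c ∧ G.Adj b c then 1 else 0) := by
  rw [universalVertsIn, card_filter, sum_insert (by simp [hab, hac]), sum_insert (by simp [hbc]),
    sum_singleton, add_assoc]
  simp [hab, hac, hbc, hab.symm, hac.symm, hbc.symm, G.adj_comm]

lemma card_connectedComponent_compl_induce_sub_one_add {S : Finset V} (hS : #S = 3) :
    Nat.card (G.induce (S : Set V))ᶜ.ConnectedComponent - 1 +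
        (if G.IsNClique 3 S then 1 else 0) = #(G.universalVertsIn S) := by
  obtain ⟨a, b, c, hab, hac, hbc, rfl⟩ := card_eq_three.1 hS
  rw [card_connectedComponent_compl_induce_triple G hab hac hbc, comap_vecCons_eq_graphOnThree,
    card_universalVertsIn_triple G hab hac hbc]
  simpa [is3Clique_triple_iff] using
    card_connectedComponent_compl_graphOnThree (G.Adj a b) (G.Adj a c) (G.Adj b c)

variable [Fintype V]

lemma card_filter_mem_universalVertsIn (v : V) :
    #{S ∈ (univ : Finset V).powersetCard 3 | v ∈ G.universalVertsIn S} =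
      (G.degree v).choose 2 := by
  rw [← card_neighborFinset_eq_degree, ← card_powersetCard]
  have hv {T : Finset V} (hT : T ⊆ G.neighborFinset v) : v ∉ T := fun hvT =>
    G.notMem_neighborFinset_self v (hT hvT)
  refine card_nbij' (fun S => S.erase v) (insert v) ?_ ?_ ?_ ?_ <;> intro X hX <;>
    simp only [universalVertsIn, coe_filter, Set.mem_ofPred_eq, mem_coe, mem_filter,
      mem_powersetCard, subset_univ, true_and] at hX ⊢
  · obtain ⟨hcard, hvS, hadj⟩ := hX
    refine ⟨fun w hw => ?_, by rw [card_erase_of_mem hvS, hcard]⟩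
    rw [mem_erase] at hw
    exact (G.mem_neighborFinset v w).2 (hadj w hw.2 hw.1)
  · obtain ⟨hTN, hcard⟩ := hX
    refine ⟨by rw [card_insert_of_notMem (hv hTN), hcard], mem_insert_self v X, ?_⟩
    intro w hw hwv
    exact (G.mem_neighborFinset v w).1 (hTN ((mem_insert.1 hw).resolve_left hwv))
  · exact insert_erase hX.2.1
  · exact erase_insert (hv hX.1)

lemma sum_card_universalVertsIn :
    ∑ S ∈ (univ : Finset V).powersetCard 3, #(G.universalVertsIn S) =
      ∑ v, (G.degree v).choose 2 := by
  simpa [bipartiteAbove, bipartiteBelow, card_filter_mem_universalVertsIn] using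
    sum_card_bipartiteAbove_eq_sum_card_bipartiteBelow (s := univ.powersetCard 3) (t := univ)
      fun S v => v ∈ G.universalVertsIn S

lemma cliqueFinset_eq_filter_powersetCard (n : ℕ) :
    G.cliqueFinset n = {S ∈ (univ : Finset V).powersetCard n | G.IsNClique n S} := by
  ext S
  simp only [mem_cliqueFinset_iff, mem_filter, mem_powersetCard_univ]
  exact ⟨fun h => ⟨h.card_eq, h⟩, And.right⟩

end SimpleGraph

/-- For every finite simple graph `G`,
`B_1(G) = Σ_{v ∈ V} C(deg v, 2) − k_3(G)`. -/
theorem linStrand_one_eq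
    {V : Type*} [Fintype V] [DecidableEq V] (G : SimpleGraph V) [DecidableRel G.Adj] :
    (linStrand G 1 : ℤ) =
      ∑ v : V, ((G.degree v).choose 2 : ℤ) - (G.cliqueFinset 3).card := by
  have key : linStrand G 1 + #(G.cliqueFinset 3) = ∑ v, (G.degree v).choose 2 := by
    rw [linStrand, G.cliqueFinset_eq_filter_powersetCard, card_filter, ← sum_add_distrib,
      ← G.sum_card_universalVertsIn]
    exact sum_congr rfl fun S hS =>
      G.card_connectedComponent_compl_induce_sub_one_add (mem_powersetCard_univ.1 hS)
  rw [← Nat.cast_sum, ← key]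
  push_cast
  ring
end

section
/- Let G be a forest, i.e., a finite simple graph with no cycles (acyclic). Then for every integer i ≥ 1, B_i(G) = Σ_{v ∈ V} C(deg v, i+1). -/
open Finset

/-!
Let `S` be a set of at least three vertices of a forest `G`. If `S` spans a star of `G`, its
centre is unique and isolated in the complement of `G[S]`, while the leaves form a clique there
because `G` has no triangles: the complement has two components. Otherwise the complement is
connected: two adjacent vertices `x ~ y` of `G[S]` have non-neighbours `a` of `x` and `b` of `y`,
and since `G` has no 4-cycles, `x, a, b, y` is a walk in the complement. So the summand for `S` is
the number of centres of stars spanned by `S`, and stars of size `i + 2` centred at `v` are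
`v` together with `i + 1` neighbours of `v`.
-/

namespace SimpleGraph

variable {W : Type*} {H : SimpleGraph W}

theorem IsAcyclic.eq_of_adj_of_adj (hH : H.IsAcyclic) {a b c d : W} (hab : H.Adj a b)
    (hbc : H.Adj b c) (had : H.Adj a d) (hdc : H.Adj d c) (hac : a ≠ c) : b = d := by
  have hb : (Walk.cons hab (Walk.cons hbc Walk.nil)).IsPath := by simp [hab.ne, hbc.ne, hac]
  have hd : (Walk.cons had (Walk.cons hdc Walk.nil)).IsPath := by simp [had.ne, hdc.ne, hac]
  simpa using congrArg (fun p : H.Path a c => p.1.support)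
    ((hH.subsingleton_path a c).elim ⟨_, hb⟩ ⟨_, hd⟩)

theorem CliqueFree.card_connectedComponent_compl_of_isUniversal [Nontrivial W]
    (hH : H.CliqueFree 3) {v : W} (hv : H.IsUniversal v) :
    Nat.card Hᶜ.ConnectedComponent = 2 := by
  classical
  obtain ⟨w, hwv⟩ := exists_ne v
  have hiso : Hᶜ.IsIsolated v := isIsolated_compl_iff_isUniversal.2 hv
  refine Nat.card_eq_two_iff.2
    ⟨Hᶜ.connectedComponentMk v, Hᶜ.connectedComponentMk w, ?_, ?_⟩
  · intro h
    obtain ⟨p⟩ := ConnectedComponent.exact h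
    cases p with
    | nil => exact hwv rfl
    | cons hadj _ => exact hiso _ hadj
  · refine Set.eq_univ_of_forall (ConnectedComponent.ind fun u => ?_)
    by_cases huv : u = v
    · simp [huv]
    refine Or.inr (ConnectedComponent.sound ?_)
    by_cases huw : u = w
    · rw [huw]
    refine Adj.reachable ⟨huw, fun hadj => hH {v, u, w} (is3Clique_triple_iff.2 ?_)⟩
    exact ⟨hv (Ne.symm huv), hv (Ne.symm hwv), hadj⟩

theorem IsAcyclic.preconnected_compl (hH : H.IsAcyclic) (h : ∀ v, ¬ H.IsUniversal v) :
    Hᶜ.Preconnected := by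
  have hcompl {x y : W} (hxy : x ≠ y) (hn : ¬ H.Adj x y) : Hᶜ.Reachable x y :=
    Adj.reachable ⟨hxy, hn⟩
  intro x y
  by_cases hxy : x = y
  · rw [hxy]
  by_cases hx : H.Adj x y
  swap
  · exact hcompl hxy hx
  obtain ⟨a, hxa, hnxa⟩ : ∃ a, x ≠ a ∧ ¬ H.Adj x a := by simpa [IsUniversal] using h x
  have hay : a ≠ y := by rintro rfl; exact hnxa hx
  by_cases hay' : H.Adj a y
  swap
  · exact (hcompl hxa hnxa).trans (hcompl hay hay')
  obtain ⟨b, hyb, hnyb⟩ : ∃ b, y ≠ b ∧ ¬ H.Adj y b := by simpa [IsUniversal] using h y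
  have hbx : b ≠ x := by rintro rfl; exact hnyb hx.symm
  by_cases hbx' : H.Adj b x
  swap
  · exact ((hcompl hyb hnyb).trans (hcompl hbx hbx')).symm
  have hab : a ≠ b := by rintro rfl; exact hnyb hay'.symm
  -- `a ~ b` would close the 4-cycle `x ~ y ~ a ~ b ~ x`
  have hnab : ¬ H.Adj a b := fun hab =>
    hyb (hH.eq_of_adj_of_adj hx hay'.symm hbx'.symm hab.symm hxa)
  exact ((hcompl hxa hnxa).trans (hcompl hab hnab)).trans (hcompl hyb.symm fun h => hnyb h.symm)

variable {V : Type*} [Fintype V] [DecidableEq V] (G : SimpleGraph V) [DecidableRel G.Adj]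

def starCenters (S : Finset V) : Finset V := {v ∈ S | S.erase v ⊆ G.neighborFinset v}

variable {G}

theorem mem_starCenters_iff_isUniversal {S : Finset V} {v : V} (hv : v ∈ S) :
    v ∈ G.starCenters S ↔ (G.induce (S : Set V)).IsUniversal ⟨v, hv⟩ := by
  simp only [starCenters, subset_iff, mem_erase, ne_eq, mem_neighborFinset, and_imp, mem_filter, hv,
    true_and, IsUniversal, SetLike.coe_sort_coe, Subtype.ext_iff, comap_adj,
    Function.Embedding.subtype_apply, Subtype.forall]
  exact ⟨fun h w hw hvw => h (Ne.symm hvw) hw, fun h w hwv hw => h w hw (Ne.symm hwv)⟩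

theorem card_starCenters_le_one (hG : G.CliqueFree 3) {S : Finset V} (hS : 3 ≤ #S) :
    #(G.starCenters S) ≤ 1 := by
  refine card_le_one.2 fun a ha b hb => by_contra fun hab => ?_
  simp only [starCenters, mem_filter] at ha hb
  have hba : b ∈ S.erase a := mem_erase.2 ⟨Ne.symm hab, hb.1⟩
  obtain ⟨u, hu⟩ : ((S.erase a).erase b).Nonempty := by
    rw [← card_pos, card_erase_of_mem hba, card_erase_of_mem ha.1]
    omega
  simp only [mem_erase] at hu
  refine hG {a, b, u} (is3Clique_triple_iff.2 ⟨?_, ?_, ?_⟩)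
  · exact (mem_neighborFinset ..).1 (ha.2 hba)
  · exact (mem_neighborFinset ..).1 (ha.2 (mem_erase.2 ⟨hu.2.1, hu.2.2⟩))
  · exact (mem_neighborFinset ..).1 (hb.2 (mem_erase.2 ⟨hu.1, hu.2.2⟩))

theorem card_connectedComponent_compl_induce (hG : G.IsAcyclic) {S : Finset V} (hS : 3 ≤ #S) :
    Nat.card (G.induce (S : Set V))ᶜ.ConnectedComponent = #(G.starCenters S) + 1 := by
  have : Nontrivial (S : Set V) :=
    (Finset.one_lt_card_iff_nontrivial.1 (by omega)).coe_sort
  rcases (G.starCenters S).eq_empty_or_nonempty with h | ⟨v, hv⟩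
  · have hconn := (hG.induce (S : Set V)).preconnected_compl fun w hw =>
      (notMem_empty w.1 (h ▸ (mem_starCenters_iff_isUniversal w.2).2 hw))
    rw [h, card_empty, Nat.card_eq_one_iff_unique]
    exact ⟨hconn.subsingleton_connectedComponent,
      ⟨connectedComponentMk _ (Classical.arbitrary _)⟩⟩
  · have hvS : v ∈ S := (mem_filter.1 hv).1
    rw [((hG.induce (S : Set V)).cliqueFree le_rfl).card_connectedComponent_compl_of_isUniversal
      ((mem_starCenters_iff_isUniversal hvS).1 hv),
      le_antisymm (card_starCenters_le_one (hG.cliqueFree le_rfl) hS) (card_pos.2 ⟨v, hv⟩)]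

theorem card_filter_mem_starCenters (v : V) (k : ℕ) :
    #{S ∈ univ.powersetCard (k + 1) | v ∈ G.starCenters S} = (G.degree v).choose k := by
  rw [← card_neighborFinset_eq_degree, ← card_powersetCard]
  have hv : v ∉ G.neighborFinset v := by simp
  refine card_bij' (fun S _ => S.erase v) (fun T _ => insert v T) (fun S hS => ?_)
    (fun T hT => ?_) (fun S hS => insert_erase (mem_filter.1 (mem_filter.1 hS).2).1)
    (fun T hT => erase_insert fun h => hv ((mem_powersetCard.1 hT).1 h))
  · simp only [mem_filter, mem_powersetCard, starCenters] at hS ⊢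
    exact ⟨hS.2.2, by rw [card_erase_of_mem hS.2.1, hS.1.2, Nat.add_sub_cancel]⟩
  · rw [mem_powersetCard] at hT
    have hvT : v ∉ T := fun h => hv (hT.1 h)
    simp only [mem_filter, mem_powersetCard, starCenters, mem_insert_self, erase_insert hvT]
    exact ⟨⟨subset_univ _, by rw [card_insert_of_notMem hvT, hT.2]⟩, trivial, hT.1⟩

end SimpleGraph

/-- If `G` is a forest (an acyclic finite simple graph), then for every `i ≥ 1`,
`B_i(G) = Σ_{v ∈ V} C(deg v, i+1)`. -/
theorem linStrand_of_isAcyclic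
    {V : Type*} [Fintype V] [DecidableEq V] (G : SimpleGraph V) [DecidableRel G.Adj]
    (hG : G.IsAcyclic) (i : ℕ) (hi : 1 ≤ i) :
    linStrand G i = ∑ v : V, (G.degree v).choose (i + 1) := by
  calc linStrand G i = ∑ S ∈ univ.powersetCard (i + 2), #(G.starCenters S) := by
        refine sum_congr rfl fun S hS => ?_
        have hS3 : 3 ≤ #S := by rw [(mem_powersetCard.1 hS).2]; omega
        rw [G.card_connectedComponent_compl_induce hG hS3, Nat.add_sub_cancel]
    _ = ∑ v, #{S ∈ univ.powersetCard (i + 2) | v ∈ G.starCenters S} := by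
        simpa [bipartiteAbove, bipartiteBelow] using
          sum_card_bipartiteAbove_eq_sum_card_bipartiteBelow (s := univ.powersetCard (i + 2))
            (t := univ) (fun S v => v ∈ G.starCenters S)
    _ = ∑ v : V, (G.degree v).choose (i + 1) :=
        sum_congr rfl fun v _ => G.card_filter_mem_starCenters v (i + 1)
end

section
/- Let K_{a,b} (with a, b ≥ 1) be the complete bipartite graph with parts of sizes a and b. Then for every integer i ≥ 0, B_i(K_{a,b}) = C(a+b, i+2) − C(a, i+2) − C(b, i+2). -/
open Finset

section aux

variable {a b : ℕ}

lemma kab_compl_adj (S : Finset (Fin a ⊕ Fin b))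
    (u v : ↥((S : Set (Fin a ⊕ Fin b)))) :
    (((completeBipartiteGraph (Fin a) (Fin b)).induce (S : Set (Fin a ⊕ Fin b)))ᶜ).Adj u v ↔
      u ≠ v ∧ (u : Fin a ⊕ Fin b).isLeft = (v : Fin a ⊕ Fin b).isLeft := by
  obtain ⟨u, hu⟩ := u; obtain ⟨v, hv⟩ := v
  simp only [SimpleGraph.compl_adj, SimpleGraph.comap_adj, completeBipartiteGraph_adj,
    Function.Embedding.coe_subtype, ne_eq, Subtype.mk.injEq]
  cases u <;> cases v <;> simp

lemma kab_reach (S : Finset (Fin a ⊕ Fin b))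
    (u v : ↥((S : Set (Fin a ⊕ Fin b)))) :
    (((completeBipartiteGraph (Fin a) (Fin b)).induce (S : Set (Fin a ⊕ Fin b)))ᶜ).Reachable u v ↔
      (u : Fin a ⊕ Fin b).isLeft = (v : Fin a ⊕ Fin b).isLeft := by
  constructor
  · rintro ⟨p⟩
    induction p with
    | nil => rfl
    | cons h p ih => exact (((kab_compl_adj S _ _).1 h).2).trans ih
  · intro h
    by_cases huv : u = v
    · exact huv ▸ SimpleGraph.Reachable.refl u
    · exact ((kab_compl_adj S u v).2 ⟨huv, h⟩).reachable

lemma kab_card_comp (S : Finset (Fin a ⊕ Fin b)) :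
    Nat.card (((completeBipartiteGraph (Fin a) (Fin b)).induce
        (S : Set (Fin a ⊕ Fin b)))ᶜ).ConnectedComponent
      = (S.image Sum.isLeft).card := by
  rw [← Nat.card_eq_finsetCard]
  refine Nat.card_eq_of_bijective
    (SimpleGraph.ConnectedComponent.lift
      (fun v => (⟨(v : Fin a ⊕ Fin b).isLeft,
        Finset.mem_image.2 ⟨v.1, by exact_mod_cast v.2, rfl⟩⟩ : ↥(S.image Sum.isLeft)))
      (fun v w p _ => Subtype.ext ((kab_reach S v w).1 ⟨p⟩))) ⟨?_, ?_⟩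
  · refine SimpleGraph.ConnectedComponent.ind₂ (fun u v h => ?_)
    exact SimpleGraph.ConnectedComponent.sound ((kab_reach S u v).2 (congrArg Subtype.val h))
  · rintro ⟨bl, hbl⟩
    obtain ⟨v, hv, rfl⟩ := Finset.mem_image.1 hbl
    exact ⟨SimpleGraph.connectedComponentMk _ ⟨v, by exact_mod_cast hv⟩, rfl⟩

end aux

/-- For the complete bipartite graph `K_{a,b}` with `a, b ≥ 1` and every `i ≥ 0`,
`B_i(K_{a,b}) = C(a+b, i+2) − C(a, i+2) − C(b, i+2)`. -/
theorem linStrand_completeBipartiteGraph (a b : ℕ) (ha : 1 ≤ a) (hb : 1 ≤ b) (i : ℕ) :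
    (linStrand (completeBipartiteGraph (Fin a) (Fin b)) i : ℤ) =
      ((a + b).choose (i + 2) : ℤ) - a.choose (i + 2) - b.choose (i + 2) := by
  classical
  set L : Finset (Fin a ⊕ Fin b) := univ.filter (fun x => x.isLeft = true) with hL
  set R : Finset (Fin a ⊕ Fin b) := univ.filter (fun x => x.isLeft = false) with hR
  have hLcard : L.card = a := by
    have : L = (univ : Finset (Fin a)).map ⟨Sum.inl, Sum.inl_injective⟩ := by
      ext x; cases x <;> simp [hL]
    rw [this, Finset.card_map, Finset.card_univ, Fintype.card_fin]
  have hRcard : R.card = b := by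
    have : R = (univ : Finset (Fin b)).map ⟨Sum.inr, Sum.inr_injective⟩ := by
      ext x; cases x <;> simp [hR]
    rw [this, Finset.card_map, Finset.card_univ, Fintype.card_fin]
  have hterm : ∀ S ∈ (univ : Finset (Fin a ⊕ Fin b)).powersetCard (i + 2),
      ((Nat.card (((completeBipartiteGraph (Fin a) (Fin b)).induce
          (S : Set (Fin a ⊕ Fin b)))ᶜ).ConnectedComponent - 1 : ℕ) : ℤ)
        = 1 - (if S ⊆ L then 1 else 0) - (if S ⊆ R then 1 else 0) := by
    intro S hS
    rw [Finset.mem_powersetCard] at hS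
    have hSne : S.Nonempty := by
      rw [← Finset.card_pos, hS.2]; omega
    rw [kab_card_comp]
    have hsubL : S ⊆ L ↔ ∀ x ∈ S, x.isLeft = true := by
      simp [hL, Finset.subset_iff]
    have hsubR : S ⊆ R ↔ ∀ x ∈ S, x.isLeft = false := by
      simp [hR, Finset.subset_iff]
    by_cases h1 : S ⊆ L
    · have himg : S.image Sum.isLeft = {true} := by
        apply Finset.eq_singleton_iff_nonempty_unique_mem.2
        refine ⟨hSne.image _, fun y hy => ?_⟩
        obtain ⟨x, hx, rfl⟩ := Finset.mem_image.1 hy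
        exact hsubL.1 h1 x hx
      have h2 : ¬ S ⊆ R := by
        intro h2
        obtain ⟨x, hx⟩ := hSne
        have := hsubL.1 h1 x hx
        have := hsubR.1 h2 x hx
        simp_all
      rw [himg]; simp [h1, h2]
    · by_cases h2 : S ⊆ R
      · have himg : S.image Sum.isLeft = {false} := by
          apply Finset.eq_singleton_iff_nonempty_unique_mem.2
          refine ⟨hSne.image _, fun y hy => ?_⟩
          obtain ⟨x, hx, rfl⟩ := Finset.mem_image.1 hy
          exact hsubR.1 h2 x hx
        rw [himg]; simp [h1, h2]
      · have himg : S.image Sum.isLeft = {false, true} := by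
          apply Finset.Subset.antisymm
          · intro y hy; fin_cases y <;> simp
          · obtain ⟨x, hx, hxf⟩ : ∃ x ∈ S, x.isLeft = false := by
              by_contra hc; push_neg at hc
              exact h1 (hsubL.2 (fun x hx => by simpa using hc x hx))
            obtain ⟨y, hy, hyt⟩ : ∃ y ∈ S, y.isLeft = true := by
              by_contra hc; push_neg at hc
              exact h2 (hsubR.2 (fun x hx => by simpa using hc x hx))
            intro z hz
            simp only [Finset.mem_insert, Finset.mem_singleton] at hz
            rcases hz with rfl | rfl
            · exact Finset.mem_image.2 ⟨x, hx, hxf⟩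
            · exact Finset.mem_image.2 ⟨y, hy, hyt⟩
        rw [himg]; norm_num [h1, h2]
  have hfilterL : ((univ : Finset (Fin a ⊕ Fin b)).powersetCard (i + 2)).filter (· ⊆ L)
      = L.powersetCard (i + 2) := by
    ext S
    simp only [Finset.mem_filter, Finset.mem_powersetCard]
    exact ⟨fun ⟨⟨_, h2⟩, h3⟩ => ⟨h3, h2⟩, fun ⟨h1, h2⟩ => ⟨⟨Finset.subset_univ _, h2⟩, h1⟩⟩
  have hfilterR : ((univ : Finset (Fin a ⊕ Fin b)).powersetCard (i + 2)).filter (· ⊆ R)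
      = R.powersetCard (i + 2) := by
    ext S
    simp only [Finset.mem_filter, Finset.mem_powersetCard]
    exact ⟨fun ⟨⟨_, h2⟩, h3⟩ => ⟨h3, h2⟩, fun ⟨h1, h2⟩ => ⟨⟨Finset.subset_univ _, h2⟩, h1⟩⟩
  have hcast : (linStrand (completeBipartiteGraph (Fin a) (Fin b)) i : ℤ)
      = ∑ S ∈ (univ : Finset (Fin a ⊕ Fin b)).powersetCard (i + 2),
          ((Nat.card (((completeBipartiteGraph (Fin a) (Fin b)).induce
            (S : Set (Fin a ⊕ Fin b)))ᶜ).ConnectedComponent - 1 : ℕ) : ℤ) := by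
    unfold linStrand; push_cast; rfl
  rw [hcast, Finset.sum_congr rfl hterm, Finset.sum_sub_distrib, Finset.sum_sub_distrib,
    Finset.sum_const, Finset.sum_boole, Finset.sum_boole, hfilterL, hfilterR,
    Finset.card_powersetCard, Finset.card_powersetCard, Finset.card_powersetCard,
    hLcard, hRcard, Finset.card_univ, Fintype.card_sum, Fintype.card_fin, Fintype.card_fin]
  push_cast
  ring
end

section
/- Let G be a finite simple graph with n vertices and e ≥ 1 edges, and let j ≥ 0 and l ≥ 1 be the unique integers satisfying Σ_{t=0}^{j−1}(n−t) < e ≤ Σ_{t=0}^{j}(n−t) and l = e − Σ_{t=0}^{j−1}(n−t). Then for every integer i ≥ 0, B_i(G) ≤ Σ_{s=1}^{j} Σ_{u=s}^{n} C(u−1, i) + Σ_{u=j+1}^{j+l} C(u−1, i). -/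
/-!
Order the vertices greedily, each one of maximum degree in the subgraph induced by itself and the
later vertices, and let `d s` be the number of later neighbours of the `s`-th vertex. Sending a
component of the complement of `G[S]` that misses the last vertex of `S` to its own last vertex
`x` and to `S \ {x}`, a set of earlier vertices and later neighbours of `x` not all earlier, gives
`B_i(G) ≤ Σ_s Σ_{k < d s} C(s + k, i)`. The bound of the theorem is the same double sum for the
lex sequence `(n, n - 1, …, n - j + 1, l, 0, …)`. Since `C(·, i)` is monotone it suffices that
for every `w` at most as many of the numbers `s + k`, `k < d s`, as of their lex counterparts
are `≥ w`. This goes by induction on `n`, removing the first vertex: the greedy choice gives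
`2 Σ_{t ≥ s} d t ≤ (n - s) d s`, so `d 0` is at least the average degree, and shortening the
first lex block to `d 0` pushes monomials into a window of at most two later lex blocks.
-/

open Finset

namespace LinStrand

section LayerCake

variable {ι κ : Type*} {f : ℕ → ℕ}

theorem sum_comp_eq_layerCake (hf : Monotone f) (A : Finset ι) (a : ι → ℕ) {N : ℕ}
    (hN : ∀ x ∈ A, a x ≤ N) :
    ∑ x ∈ A, f (a x) = #A * f 0 + ∑ w ∈ range N, #{x ∈ A | w + 1 ≤ a x} * (f (w + 1) - f w) := by
  have hx : ∀ x ∈ A, f (a x) = f 0 + ∑ w ∈ range N, if w + 1 ≤ a x then f (w + 1) - f w else 0 := by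
    intro x hx
    have hfilter : {w ∈ range N | w + 1 ≤ a x} = range (a x) := by
      ext w; have := hN x hx; simp only [mem_filter, mem_range]; omega
    rw [← sum_filter, hfilter, sum_range_tsub hf, Nat.add_sub_cancel' (hf (Nat.zero_le _))]
  simp only [sum_congr rfl hx, sum_add_distrib, sum_const, smul_eq_mul]
  rw [sum_comm]
  simp only [← sum_filter, sum_const, smul_eq_mul]

theorem sum_comp_le_sum_comp_of_card_le (hf : Monotone f) {A : Finset ι} {B : Finset κ}
    {a : ι → ℕ} {b : κ → ℕ} (h : ∀ w, #{x ∈ A | w ≤ a x} ≤ #{y ∈ B | w ≤ b y}) :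
    ∑ x ∈ A, f (a x) ≤ ∑ y ∈ B, f (b y) := by
  have hA : ∀ x ∈ A, a x ≤ A.sup a + B.sup b := fun x hx => le_add_right (le_sup hx)
  have hB : ∀ y ∈ B, b y ≤ A.sup a + B.sup b := fun y hy => le_add_left (le_sup hy)
  rw [sum_comp_eq_layerCake hf A a hA, sum_comp_eq_layerCake hf B b hB]
  have h0 := h 0
  simp only [zero_le, filter_true] at h0
  gcongr
  exact h _

end LayerCake

section Stairs

/- A sequence `c` is read as the staircase with cells `(s, k)`, `k < c s`, at height `s + k`. -/

variable {f : ℕ → ℕ} {n : ℕ}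

theorem card_stairs_filter_ge (c : ℕ → ℕ) (w : ℕ) :
    #{p ∈ (range n).sigma (fun s => range (c s)) | w ≤ p.1 + p.2}
      = ∑ s ∈ range n, (c s - (w - s)) := by
  rw [card_filter, sum_sigma]
  refine sum_congr rfl fun s _ => ?_
  rw [← card_filter]
  have : {k ∈ range (c s) | w ≤ s + k} = Ico (w - s) (c s) := by
    ext k; simp only [mem_filter, mem_range, mem_Ico]; omega
  rw [this, Nat.card_Ico]

theorem sum_min_add_sum_tsub (n : ℕ) (c : ℕ → ℕ) (w : ℕ) :
    ∑ s ∈ range n, min (c s) (w - s) + ∑ s ∈ range n, (c s - (w - s)) = ∑ s ∈ range n, c s := by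
  rw [← sum_add_distrib]
  exact sum_congr rfl fun s _ => by omega

theorem sum_stairs_le_of_sum_min_le (hf : Monotone f) {c c' : ℕ → ℕ}
    (hsum : ∑ s ∈ range n, c s = ∑ s ∈ range n, c' s)
    (hlow : ∀ w, ∑ s ∈ range n, min (c' s) (w - s) ≤ ∑ s ∈ range n, min (c s) (w - s)) :
    ∑ s ∈ range n, ∑ k ∈ range (c s), f (s + k) ≤ ∑ s ∈ range n, ∑ k ∈ range (c' s), f (s + k) := by
  have key := sum_comp_le_sum_comp_of_card_le hf (A := (range n).sigma fun s => range (c s))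
    (B := (range n).sigma fun s => range (c' s)) (a := fun p => p.1 + p.2) (b := fun p => p.1 + p.2)
  rw [sum_sigma, sum_sigma] at key
  refine key fun w => ?_
  rw [card_stairs_filter_ge, card_stairs_filter_ge]
  have := sum_min_add_sum_tsub n c w
  have := sum_min_add_sum_tsub n c' w
  have := hlow w
  omega

end Stairs

section Lex

/- The degree-2 monomials `x_s x_u`, `s ≤ u`, of `k[x_0, …, x_{n-1}]` come in lex order in blocks
`s = 0, 1, …` of sizes `n - s`. Among the first `e` of them, `lexBlock n e s` lie in block `s`,
with largest indices `s, s + 1, …`; `lexLowCount n e v` counts those with largest index `< v`. -/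

def lexBlockStart (n s : ℕ) : ℕ := ∑ t ∈ range s, (n - t)

def lexBlock (n e s : ℕ) : ℕ := min (n - s) (e - lexBlockStart n s)

def lexLowCount (n e v : ℕ) : ℕ := ∑ s ∈ range n, min (lexBlock n e s) (v - s)

theorem lexBlockStart_succ (n s : ℕ) : lexBlockStart n (s + 1) = lexBlockStart n s + (n - s) :=
  sum_range_succ _ _

theorem lexBlockStart_one (n : ℕ) : lexBlockStart n 1 = n := by
  simp [lexBlockStart]

theorem lexBlockStart_succ_succ (n s : ℕ) :
    lexBlockStart (n + 1) (s + 1) = n + 1 + lexBlockStart n s := by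
  rw [lexBlockStart, sum_range_succ', add_comm]
  simp [lexBlockStart]

theorem lexBlockStart_mono (n : ℕ) : Monotone (lexBlockStart n) := fun _ _ h =>
  sum_le_sum_of_subset (range_subset_range.2 h)

theorem two_mul_lexBlockStart_add_mul_self {n s : ℕ} (h : s ≤ n) :
    2 * lexBlockStart n s + s * s = s * (2 * n + 1) := by
  induction s with
  | zero => simp [lexBlockStart]
  | succ s ih =>
    obtain ⟨k, rfl⟩ := Nat.exists_eq_add_of_le h
    rw [lexBlockStart_succ, show s + 1 + k - s = k + 1 by omega]
    linear_combination ih (by omega)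

theorem lexBlock_zero (n e : ℕ) : lexBlock n e 0 = min n e := by
  simp [lexBlock, lexBlockStart]

theorem lexBlock_succ_succ (n e s : ℕ) :
    lexBlock (n + 1) e (s + 1) = lexBlock n (e - (n + 1)) s := by
  simp only [lexBlock, lexBlockStart_succ_succ]
  omega

theorem lexLowCount_succ (n e v : ℕ) :
    lexLowCount (n + 1) e v = min (n + 1) (min e v) + lexLowCount n (e - (n + 1)) (v - 1) := by
  rw [lexLowCount, sum_range_succ', add_comm, lexBlock_zero, min_assoc]
  congr 1
  refine sum_congr rfl fun s _ => ?_
  rw [lexBlock_succ_succ, Nat.sub_sub, add_comm 1 s]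

theorem lexLowCount_zero_left (n v : ℕ) : lexLowCount n 0 v = 0 := by
  simp [lexLowCount, lexBlock]

theorem lexLowCount_le (n e v : ℕ) : lexLowCount n e v ≤ e := by
  induction n generalizing e v with
  | zero => simp [lexLowCount]
  | succ n ih =>
    rw [lexLowCount_succ]
    have := ih (e - (n + 1)) (v - 1)
    omega

theorem lexLowCount_mono {e e' : ℕ} (n v : ℕ) (h : e ≤ e') :
    lexLowCount n e v ≤ lexLowCount n e' v :=
  sum_le_sum fun s _ => by simp only [lexBlock]; omega

theorem min_le_lexLowCount {n : ℕ} (hn : 0 < n) (e v : ℕ) :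
    min n (min e v) ≤ lexLowCount n e v := by
  obtain ⟨n, rfl⟩ := Nat.exists_eq_add_of_lt hn
  rw [zero_add, lexLowCount_succ]
  exact Nat.le_add_right _ _

theorem lexLowCount_of_le {n v : ℕ} (e : ℕ) (h : n ≤ v) :
    lexLowCount n e v = min e (lexBlockStart n n) := by
  induction n generalizing e v with
  | zero => simp [lexLowCount, lexBlockStart]
  | succ n ih =>
    rw [lexLowCount_succ, ih _ (by omega), lexBlockStart_succ_succ]
    omega

/- At most `m - w` of `m + 1 - D` consecutive monomials inside the first `D` blocks have largest
index `≥ w`: the window meets at most two blocks, and the monomials of a block with largest index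
`≥ w` are its last `m - w`. -/
theorem lexLowCount_window {m D b w : ℕ} (hD : 1 ≤ D) (hDw : D ≤ w) (hwm : w < m)
    (hb : b + (m + 1 - D) ≤ lexBlockStart m D) :
    lexLowCount m b w + (m + 1 - D) ≤ lexLowCount m (b + (m + 1 - D)) w + (m - w) := by
  induction m generalizing D b w with
  | zero => omega
  | succ m ih =>
    rw [lexLowCount_succ, lexLowCount_succ]
    have hD1 : D = 1 → b = 0 := by rintro rfl; rw [lexBlockStart_one] at hb; omega
    by_cases hbm : m + 1 ≤ b
    · obtain ⟨D, rfl⟩ : ∃ D', D = D' + 1 := ⟨D - 1, by omega⟩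
      rw [lexBlockStart_succ_succ] at hb
      have := ih (D := D) (b := b - (m + 1)) (w := w - 1)
        (by omega) (by omega) (by omega) (by omega)
      rw [show b + (m + 1 + 1 - (D + 1)) - (m + 1) = b - (m + 1) + (m + 1 - D) by omega]
      omega
    · have := min_le_lexLowCount (n := m) (by omega) (b + (m + 1 + 1 - D) - (m + 1)) (w - 1)
      rw [show b - (m + 1) = 0 by omega, lexLowCount_zero_left]
      omega

theorem lexLowCount_succ_le {m e D : ℕ} (v : ℕ) (hDm : D ≤ m) (he : 2 * e ≤ (m + 1) * D) :
    lexLowCount (m + 1) e v ≤ min D v + lexLowCount m (e - D) (v - 1) := by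
  rcases Nat.eq_zero_or_pos e with rfl | he0
  · simp [lexLowCount_zero_left]
  have hD : 1 ≤ D := Nat.pos_of_ne_zero fun h => by subst h; omega
  have hblock : e - D ≤ lexBlockStart m D := by
    have := two_mul_lexBlockStart_add_mul_self hDm
    have : D * D ≤ D * m := Nat.mul_le_mul_left D hDm
    suffices 2 * e ≤ 2 * lexBlockStart m D + 2 * D by omega
    nlinarith
  rw [lexLowCount_succ]
  by_cases hvD : v ≤ D
  · have := lexLowCount_mono m (v - 1) (show e - (m + 1) ≤ e - D by omega)
    omega
  by_cases hmv : m < v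
  · have := lexLowCount_le m (e - (m + 1)) (v - 1)
    have := lexBlockStart_mono m hDm
    rw [lexLowCount_of_le (e - D) (by omega : m ≤ v - 1)]
    omega
  by_cases hem : e ≤ m + 1
  · have := min_le_lexLowCount (n := m) (by omega) (e - D) (v - 1)
    rw [show e - (m + 1) = 0 by omega, lexLowCount_zero_left]
    omega
  have := lexLowCount_window (m := m) (D := D) (b := e - (m + 1)) (w := v - 1) hD
    (by omega) (by omega)
    (by rwa [show e - (m + 1) + (m + 1 - D) = e - D by omega])
  rw [show e - (m + 1) + (m + 1 - D) = e - D by omega] at this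
  omega

/- The numbers of later neighbours in an ordering of `n` vertices in which each vertex has maximum
degree in the subgraph induced by itself and the later ones; the second condition is the handshake
lemma in that subgraph. -/
def IsGreedyUpDegrees (n : ℕ) (d : ℕ → ℕ) : Prop :=
  ∀ s < n, d s + s < n ∧ 2 * ∑ t ∈ Ico s n, d t ≤ (n - s) * d s

theorem IsGreedyUpDegrees.tail {n : ℕ} {d : ℕ → ℕ} (h : IsGreedyUpDegrees (n + 1) d) :
    IsGreedyUpDegrees n (fun t => d (t + 1)) := by
  intro s hs
  dsimp only
  obtain ⟨hbound, hsum⟩ := h (s + 1) (by omega)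
  refine ⟨by omega, ?_⟩
  rw [Nat.add_sub_add_right] at hsum
  simpa only [sum_Ico_add' d] using hsum

theorem lexLowCount_le_of_isGreedyUpDegrees {n : ℕ} {d : ℕ → ℕ} (h : IsGreedyUpDegrees n d)
    (v : ℕ) :
    lexLowCount n (∑ t ∈ range n, d t) v ≤ ∑ s ∈ range n, min (d s) (v - s) := by
  induction n generalizing d v with
  | zero => simp [lexLowCount]
  | succ m ih =>
    obtain ⟨hbound, hsum⟩ := h 0 (by omega)
    rw [← range_eq_Ico, Nat.sub_zero] at hsum
    have hfirst := lexLowCount_succ_le v (by omega : d 0 ≤ m) hsum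
    rw [show ∑ t ∈ range (m + 1), d t - d 0 = ∑ t ∈ range m, d (t + 1) by
      rw [sum_range_succ' d, add_tsub_cancel_right]] at hfirst
    have htail : ∑ s ∈ range m, min (d (s + 1)) (v - 1 - s)
        = ∑ s ∈ range m, min (d (s + 1)) (v - (s + 1)) :=
      sum_congr rfl fun s _ => by rw [Nat.sub_sub, add_comm 1 s]
    rw [sum_range_succ' (fun s => min (d s) (v - s)), Nat.sub_zero]
    have := ih h.tail (v - 1)
    omega

theorem sum_le_lexBlockStart_of_isGreedyUpDegrees {n : ℕ} {d : ℕ → ℕ} (h : IsGreedyUpDegrees n d) :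
    ∑ t ∈ range n, d t ≤ lexBlockStart n n :=
  sum_le_sum fun t ht => by have := (h t (mem_range.1 ht)).1; omega

theorem sum_lexBlock {n e : ℕ} (h : e ≤ lexBlockStart n n) : ∑ s ∈ range n, lexBlock n e s = e := by
  have hlow : ∑ s ∈ range n, lexBlock n e s = lexLowCount n e n :=
    sum_congr rfl fun s _ => (min_eq_left (min_le_left _ _)).symm
  rw [hlow, lexLowCount_of_le e le_rfl, min_eq_left h]

theorem sum_stairs_le_sum_lexStairs {f : ℕ → ℕ} (hf : Monotone f) {n : ℕ} {d : ℕ → ℕ}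
    (hd : IsGreedyUpDegrees n d) :
    ∑ s ∈ range n, ∑ k ∈ range (d s), f (s + k)
      ≤ ∑ s ∈ range n, ∑ k ∈ range (lexBlock n (∑ t ∈ range n, d t) s), f (s + k) :=
  sum_stairs_le_of_sum_min_le hf (sum_lexBlock (sum_le_lexBlockStart_of_isGreedyUpDegrees hd)).symm
    (lexLowCount_le_of_isGreedyUpDegrees hd)

theorem sum_Icc_add_one_eq_sum_range (g : ℕ → ℕ) (a m : ℕ) :
    ∑ u ∈ Icc (a + 1) (a + m), g (u - 1) = ∑ k ∈ range m, g (a + k) := by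
  rw [← Ico_add_one_right_eq_Icc, sum_Ico_eq_sum_range, show a + m + 1 - (a + 1) = m by omega]
  exact sum_congr rfl fun k _ => by rw [show a + 1 + k - 1 = a + k by omega]

theorem sum_lexStairs_eq (g : ℕ → ℕ) {n e j : ℕ} (hlt : lexBlockStart n j < e)
    (hle : e ≤ lexBlockStart n (j + 1)) :
    ∑ s ∈ range n, ∑ k ∈ range (lexBlock n e s), g (s + k)
      = (∑ s ∈ Icc 1 j, ∑ u ∈ Icc s n, g (u - 1))
        + ∑ u ∈ Icc (j + 1) (j + (e - lexBlockStart n j)), g (u - 1) := by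
  rw [lexBlockStart_succ] at hle
  have hjn : j < n := by omega
  have hfull : ∀ s < j, lexBlock n e s = n - s := fun s hs => by
    have := lexBlockStart_mono n (show s + 1 ≤ j by omega)
    rw [lexBlockStart_succ] at this
    simp only [lexBlock]; omega
  have hempty : ∀ s ∈ Ico (j + 1) n, lexBlock n e s = 0 := fun s hs => by
    have := lexBlockStart_mono n (mem_Ico.1 hs).1
    rw [lexBlockStart_succ] at this
    simp only [lexBlock]; omega
  rw [← sum_range_add_sum_Ico _ (show j + 1 ≤ n by omega), sum_range_succ,
    sum_eq_zero (s := Ico (j + 1) n) fun s hs => by rw [hempty s hs, sum_range_zero], add_zero,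
    sum_Icc_add_one_eq_sum_range, show lexBlock n e j = e - lexBlockStart n j by
      simp only [lexBlock]; omega]
  congr 1
  rw [← Ico_add_one_right_eq_Icc, sum_Ico_eq_sum_range, Nat.add_sub_cancel]
  refine sum_congr rfl fun s hs => ?_
  have hsj := mem_range.1 hs
  rw [hfull s hsj, show Icc (1 + s) n = Icc (s + 1) (s + (n - s)) by
    congr 1 <;> omega, sum_Icc_add_one_eq_sum_range]

end Lex

section Rank

variable {V : Type*} [Fintype V] {r : V → ℕ} (hr : Function.Injective r)
  (hlt : ∀ x, r x < Fintype.card V)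
include hr hlt

theorem image_univ_rank : univ.image r = range (Fintype.card V) :=
  eq_of_subset_of_card_le
    (fun s hs => by obtain ⟨x, _, rfl⟩ := mem_image.1 hs; exact mem_range.2 (hlt x))
    (by rw [card_range, card_image_of_injective _ hr, card_univ])

theorem exists_rank_eq {s : ℕ} (hs : s < Fintype.card V) : ∃ x, r x = s := by
  obtain ⟨x, _, hx⟩ := mem_image.1 ((image_univ_rank hr hlt).symm ▸ mem_range.2 hs)
  exact ⟨x, hx⟩

theorem sum_rank {M : Type*} [AddCommMonoid M] (g : ℕ → M) :
    ∑ x, g (r x) = ∑ s ∈ range (Fintype.card V), g s := by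
  rw [← image_univ_rank hr hlt, sum_image fun x _ y _ h => hr h]

theorem card_filter_rank (p : ℕ → Prop) [DecidablePred p] :
    #{x | p (r x)} = #{s ∈ range (Fintype.card V) | p s} := by
  simp only [card_filter]
  exact sum_rank hr hlt fun s => if p s then 1 else 0

theorem card_rank_lt (x : V) : #{y | r y < r x} = r x := by
  refine (card_filter_rank hr hlt (· < r x)).trans ?_
  rw [show {s ∈ range (Fintype.card V) | s < r x} = range (r x) by
    ext s; have := hlt x; simp only [mem_filter, mem_range]; omega, card_range]

theorem card_rank_gt (x : V) : #{y | r x < r y} = Fintype.card V - (r x + 1) := by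
  refine (card_filter_rank hr hlt (r x < ·)).trans ?_
  rw [show {s ∈ range (Fintype.card V) | r x < s} = Ico (r x + 1) (Fintype.card V) by
    ext s; simp only [mem_filter, mem_range, mem_Ico]; omega, Nat.card_Ico]

theorem card_rank_ge (x : V) : #{y | r x ≤ r y} = Fintype.card V - r x := by
  refine (card_filter_rank hr hlt (r x ≤ ·)).trans ?_
  rw [show {s ∈ range (Fintype.card V) | r x ≤ s} = Ico (r x) (Fintype.card V) by
    ext s; simp only [mem_filter, mem_range, mem_Ico]; omega, Nat.card_Ico]

end Rank

section Orderings

variable {V : Type*} [DecidableEq V] (G : SimpleGraph V) [DecidableRel G.Adj] {r : V → ℕ}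

theorem exists_greedy_rank (B : Finset V) :
    ∃ r : V → ℕ, Set.InjOn r B ∧ (∀ x ∈ B, r x < #B) ∧
      ∀ x ∈ B, ∀ y ∈ B, r x ≤ r y →
        #{z ∈ B | r x ≤ r z ∧ G.Adj y z} ≤ #{z ∈ B | r x ≤ r z ∧ G.Adj x z} := by
  induction B using Finset.strongInduction with
  | H B ih =>
  rcases B.eq_empty_or_nonempty with rfl | hB
  · exact ⟨fun _ => 0, by simp, by simp, by simp⟩
  obtain ⟨x₀, hx₀, hmax⟩ := exists_max_image B (fun y => #{z ∈ B | G.Adj y z}) hB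
  obtain ⟨r, hinj, hlt, hgreedy⟩ := ih (B.erase x₀) (erase_ssubset hx₀)
  set r' : V → ℕ := fun z => if z = x₀ then 0 else r z + 1
  have hr'₀ : r' x₀ = 0 := if_pos rfl
  have hr' : ∀ z ≠ x₀, r' z = r z + 1 := fun z hz => if_neg hz
  have hfilter : ∀ x ≠ x₀, ∀ w, #{z ∈ B | r' x ≤ r' z ∧ G.Adj w z}
      = #{z ∈ B.erase x₀ | r x ≤ r z ∧ G.Adj w z} := by
    intro x hx w
    congr 1
    ext z
    by_cases hz : z = x₀
    · simp [hz, hr'₀, hr' x hx]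
    · simp [hz, hr' x hx, hr' z hz]
  refine ⟨r', fun x hx y hy hxy => ?_, fun x hx => ?_, fun x hx y hy hxy => ?_⟩
  · by_cases hx0 : x = x₀ <;> by_cases hy0 : y = x₀
    · rw [hx0, hy0]
    · rw [hx0, hr'₀, hr' y hy0] at hxy; omega
    · rw [hy0, hr'₀, hr' x hx0] at hxy; omega
    · rw [hr' x hx0, hr' y hy0] at hxy
      exact hinj (mem_erase.2 ⟨hx0, hx⟩) (mem_erase.2 ⟨hy0, hy⟩) (by omega)
  · have := card_pos.2 hB
    by_cases hx0 : x = x₀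
    · rwa [hx0, hr'₀]
    · have := hlt x (mem_erase.2 ⟨hx0, hx⟩)
      rw [card_erase_of_mem hx₀] at this
      rw [hr' x hx0]
      omega
  · by_cases hx0 : x = x₀
    · subst hx0
      simpa [hr'₀] using hmax y hy
    · have hy0 : y ≠ x₀ := by rintro rfl; rw [hr'₀, hr' x hx0] at hxy; omega
      rw [hfilter x hx0, hfilter x hx0]
      rw [hr' x hx0, hr' y hy0, add_le_add_iff_right] at hxy
      exact hgreedy x (mem_erase.2 ⟨hx0, hx⟩) y (mem_erase.2 ⟨hy0, hy⟩) hxy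

theorem sum_card_adj_eq_two_mul_sum (hr : Function.Injective r) (B : Finset V) :
    ∑ y ∈ B, #{z ∈ B | G.Adj y z} = 2 * ∑ y ∈ B, #{z ∈ B | G.Adj y z ∧ r y < r z} := by
  have hsplit : ∀ y, #{z ∈ B | G.Adj y z}
      = #{z ∈ B | G.Adj y z ∧ r y < r z} + #{z ∈ B | G.Adj z y ∧ r z < r y} := fun y => by
    rw [← card_union_of_disjoint (disjoint_filter.2 fun z _ h₁ h₂ => lt_asymm h₁.2 h₂.2)]
    congr 1
    ext z
    simp only [mem_filter, mem_union]
    constructor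
    · rintro ⟨hz, hadj⟩
      rcases lt_or_gt_of_ne (hr.ne hadj.ne) with h | h
      · exact Or.inl ⟨hz, hadj, h⟩
      · exact Or.inr ⟨hz, hadj.symm, h⟩
    · rintro (⟨hz, hadj, _⟩ | ⟨hz, hadj, _⟩)
      · exact ⟨hz, hadj⟩
      · exact ⟨hz, hadj.symm⟩
  rw [sum_congr rfl fun y _ => hsplit y, sum_add_distrib, two_mul]
  congr 1
  exact sum_card_bipartiteAbove_eq_sum_card_bipartiteBelow fun y z => G.Adj z y ∧ r z < r y

end Orderings

section Graph

variable {V : Type*} [Fintype V] [DecidableEq V] (G : SimpleGraph V) [DecidableRel G.Adj]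
  {r : V → ℕ}

/- A vertex of maximal rank in a component of the complement of `G[S]` is adjacent in `G` to all
vertices of `S` of higher rank; only the top vertex of `S` has none. -/
theorem card_connectedComponent_compl_induce_sub_one_le (hr : Function.Injective r)
    (S : Finset V) :
    Nat.card ((G.induce (S : Set V))ᶜ.ConnectedComponent) - 1
      ≤ #{x ∈ S | (∀ y ∈ S, r x < r y → G.Adj x y) ∧ ∃ y ∈ S, r x < r y} := by
  classical
  set T := {x ∈ S | ∀ y ∈ S, r x < r y → G.Adj x y}
  have hsurj : Function.Surjective fun x : T => (G.induce (S : Set V))ᶜ.connectedComponentMk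
      ⟨x.1, mem_coe.2 (mem_filter.1 x.2).1⟩ := by
    intro C
    obtain ⟨z₀, hz₀⟩ := C.exists_rep
    obtain ⟨z, hzC, hzmax⟩ := exists_max_image
      {z | (G.induce (S : Set V))ᶜ.connectedComponentMk z = C} (fun z => r z.1)
      ⟨z₀, mem_filter.2 ⟨mem_univ _, hz₀⟩⟩
    rw [mem_filter] at hzC
    refine ⟨⟨z.1, mem_filter.2 ⟨z.2, fun y hy hzy => ?_⟩⟩, hzC.2⟩
    by_contra hadj
    have hH : (G.induce (S : Set V))ᶜ.Adj z ⟨y, hy⟩ :=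
      (SimpleGraph.compl_adj _ _ _).2 ⟨fun h => by subst h; exact lt_irrefl _ hzy, hadj⟩
    refine absurd (hzmax ⟨y, hy⟩ (mem_filter.2 ⟨mem_univ _, ?_⟩)) (not_le.2 hzy)
    rw [← hzC.2]
    exact (SimpleGraph.ConnectedComponent.connectedComponentMk_eq_of_adj hH).symm
  have hcard : Nat.card (G.induce (S : Set V))ᶜ.ConnectedComponent ≤ #T :=
    (Nat.card_le_card_of_surjective _ hsurj).trans_eq (Nat.card_eq_finsetCard T)
  have htop : #{x ∈ T | ¬∃ y ∈ S, r x < r y} ≤ 1 := by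
    refine card_le_one.2 fun x hx y hy => hr (le_antisymm ?_ ?_)
    all_goals
      simp only [T, mem_filter, not_exists, not_and, not_lt] at hx hy
    · exact hy.2 x hx.1.1
    · exact hx.2 y hy.1.1
  have := card_filter_add_card_filter_not (s := T) (fun x => ∃ y ∈ S, r x < r y)
  rw [filter_filter] at this
  omega

variable (r) in
def upDegree (x : V) : ℕ := #{z | G.Adj x z ∧ r x < r z}

theorem card_filter_powersetCard_le (hr : Function.Injective r) (i : ℕ) (x : V) :
    #{S ∈ univ.powersetCard (i + 2) |
        x ∈ S ∧ (∀ y ∈ S, r x < r y → G.Adj x y) ∧ ∃ y ∈ S, r x < r y}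
      ≤ (#{y | r y < r x} + upDegree G r x).choose (i + 1) - (#{y | r y < r x}).choose (i + 1) := by
  set L : Finset V := {y | r y < r x}
  set U : Finset V := {z | G.Adj x z ∧ r x < r z}
  have hdisj : Disjoint L U := disjoint_filter.2 fun y _ hL hU => lt_asymm hL hU.2
  calc _ ≤ #((L ∪ U).powersetCard (i + 1) \ L.powersetCard (i + 1)) := by
        refine card_le_card_of_injOn (fun S => S.erase x) (fun S hS => ?_) ?_
        · simp only [mem_coe, mem_filter, mem_powersetCard, subset_univ, true_and] at hS
          obtain ⟨hcard, hxS, hadj, y, hyS, hxy⟩ := hS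
          have hyx : y ≠ x := fun h => by subst h; exact lt_irrefl _ hxy
          simp only [mem_coe, mem_sdiff, mem_powersetCard, card_erase_of_mem hxS,
            hcard, not_and_or]
          refine ⟨⟨fun z hz => ?_, rfl⟩, Or.inl fun hsub => ?_⟩
          · obtain ⟨hzx, hzS⟩ := mem_erase.1 hz
            rcases lt_or_gt_of_ne (hr.ne hzx) with h | h
            · exact mem_union_left _ (mem_filter.2 ⟨mem_univ _, h⟩)
            · exact mem_union_right _ (mem_filter.2 ⟨mem_univ _, hadj z hzS h, h⟩)
          · exact lt_asymm hxy (mem_filter.1 (hsub (mem_erase.2 ⟨hyx, hyS⟩))).2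
        · intro S hS T hT hST
          simp only [mem_coe, mem_filter] at hS hT
          rw [← insert_erase hS.2.1, ← insert_erase hT.2.1]
          exact congrArg (insert x) hST
    _ = _ := by
        rw [card_sdiff_of_subset (powersetCard_mono subset_union_left), card_powersetCard,
          card_powersetCard, card_union_of_disjoint hdisj]
        rfl

theorem linStrand_le_sum_choose_sub (hr : Function.Injective r) (i : ℕ) :
    linStrand G i
      ≤ ∑ x, ((#{y | r y < r x} + upDegree G r x).choose (i + 1)
          - (#{y | r y < r x}).choose (i + 1)) := by
  classical
  calc linStrand G i
      ≤ ∑ S ∈ univ.powersetCard (i + 2),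
          #{x ∈ S | (∀ y ∈ S, r x < r y → G.Adj x y) ∧ ∃ y ∈ S, r x < r y} :=
        sum_le_sum fun S _ => card_connectedComponent_compl_induce_sub_one_le G hr S
    _ = ∑ S ∈ univ.powersetCard (i + 2),
          #{x | x ∈ S ∧ (∀ y ∈ S, r x < r y → G.Adj x y) ∧ ∃ y ∈ S, r x < r y} := by
        refine sum_congr rfl fun S _ => congrArg card ?_
        ext x
        simp
    _ = ∑ x, #{S ∈ univ.powersetCard (i + 2) |
          x ∈ S ∧ (∀ y ∈ S, r x < r y → G.Adj x y) ∧ ∃ y ∈ S, r x < r y} :=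
        sum_card_bipartiteAbove_eq_sum_card_bipartiteBelow _
    _ ≤ _ := sum_le_sum fun x _ => card_filter_powersetCard_le G hr i x

theorem choose_add_eq_add_sum_choose (a d i : ℕ) :
    (a + d).choose (i + 1) = a.choose (i + 1) + ∑ k ∈ range d, (a + k).choose i := by
  induction d with
  | zero => simp
  | succ d ih =>
    rw [← add_assoc, Nat.choose_succ_succ', ih, sum_range_succ]
    omega

variable (r) in
def upDegreeSeq (s : ℕ) : ℕ := ∑ x ∈ {x | r x = s}, upDegree G r x

theorem upDegreeSeq_rank (hr : Function.Injective r) (x : V) :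
    upDegreeSeq G r (r x) = upDegree G r x := by
  rw [upDegreeSeq, show ({y | r y = r x} : Finset V) = {x} by ext; simp [hr.eq_iff], sum_singleton]

theorem isGreedyUpDegrees_upDegreeSeq (hr : Function.Injective r)
    (hlt : ∀ x, r x < Fintype.card V)
    (hgreedy : ∀ x y, r x ≤ r y → #{z | r x ≤ r z ∧ G.Adj y z} ≤ #{z | r x ≤ r z ∧ G.Adj x z}) :
    IsGreedyUpDegrees (Fintype.card V) (upDegreeSeq G r) := by
  intro s hs
  obtain ⟨x, rfl⟩ := exists_rank_eq hr hlt hs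
  set B : Finset V := {z | r x ≤ r z}
  have hupB : ∀ y ∈ B, upDegree G r y = #{z ∈ B | G.Adj y z ∧ r y < r z} := fun y hy => by
    rw [upDegree, filter_filter]
    congr 1
    ext z
    simp only [B, mem_filter, mem_univ, true_and] at hy ⊢
    constructor
    · exact fun h => ⟨hy.trans h.2.le, h⟩
    · exact fun h => h.2
  have hupx : upDegree G r x = #{z | r x ≤ r z ∧ G.Adj x z} := by
    rw [upDegree]
    congr 1
    ext z
    simp only [mem_filter, mem_univ, true_and]
    exact ⟨fun h => ⟨h.2.le, h.1⟩, fun h => ⟨h.2, lt_of_le_of_ne h.1 (hr.ne h.2.ne)⟩⟩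
  have hsum : ∑ t ∈ Ico (r x) (Fintype.card V), upDegreeSeq G r t = ∑ y ∈ B, upDegree G r y := by
    rw [sum_filter]
    simp_rw [← upDegreeSeq_rank G hr]
    rw [sum_rank hr hlt fun t => if r x ≤ t then upDegreeSeq G r t else 0, ← sum_filter]
    congr 1
    ext t
    simp only [mem_Ico, mem_filter, mem_range]
    omega
  rw [upDegreeSeq_rank G hr]
  refine ⟨?_, ?_⟩
  · have hsub : ({z | G.Adj x z ∧ r x < r z} : Finset V) ⊆ ({z | r x < r z} : Finset V) :=
      fun z hz => mem_filter.2 ⟨mem_univ _, (mem_filter.1 hz).2.2⟩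
    have := card_le_card hsub
    rw [card_rank_gt hr hlt] at this
    unfold upDegree
    omega
  · rw [hsum, ← card_rank_ge hr hlt x]
    calc 2 * ∑ y ∈ B, upDegree G r y
        = 2 * ∑ y ∈ B, #{z ∈ B | G.Adj y z ∧ r y < r z} := by rw [sum_congr rfl hupB]
      _ = ∑ y ∈ B, #{z ∈ B | G.Adj y z} := (sum_card_adj_eq_two_mul_sum G hr B).symm
      _ ≤ ∑ _y ∈ B, upDegree G r x := sum_le_sum fun y hy => by
          rw [filter_filter, hupx]
          exact hgreedy x y (mem_filter.1 hy).2
      _ = #B * upDegree G r x := by rw [sum_const, smul_eq_mul]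

theorem exists_isGreedyUpDegrees :
    ∃ d : ℕ → ℕ, IsGreedyUpDegrees (Fintype.card V) d ∧
      ∑ s ∈ range (Fintype.card V), d s = #G.edgeFinset ∧
      ∀ i, linStrand G i ≤ ∑ s ∈ range (Fintype.card V), ∑ k ∈ range (d s), (s + k).choose i := by
  obtain ⟨r, hinj, hlt, hgreedy⟩ := exists_greedy_rank G univ
  rw [coe_univ, Set.injOn_univ] at hinj
  simp only [mem_univ, forall_const, card_univ] at hlt hgreedy
  refine ⟨upDegreeSeq G r, isGreedyUpDegrees_upDegreeSeq G hinj hlt hgreedy, ?_, fun i => ?_⟩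
  · rw [← sum_rank hinj hlt]
    simp only [upDegreeSeq_rank G hinj]
    have := sum_card_adj_eq_two_mul_sum G hinj univ
    simp only [← SimpleGraph.neighborFinset_eq_filter, SimpleGraph.card_neighborFinset_eq_degree,
      SimpleGraph.sum_degrees_eq_twice_card_edges] at this
    unfold upDegree
    omega
  · calc linStrand G i ≤ _ := linStrand_le_sum_choose_sub G hinj i
      _ = ∑ x, ∑ k ∈ range (upDegree G r x), (r x + k).choose i := sum_congr rfl fun x _ => by
          rw [card_rank_lt hinj hlt, choose_add_eq_add_sum_choose, Nat.add_sub_cancel_left]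
      _ = _ := by
          rw [← sum_rank hinj hlt (fun s => ∑ k ∈ range (upDegreeSeq G r s), (s + k).choose i)]
          simp only [upDegreeSeq_rank G hinj]

end Graph

end LinStrand

theorem linStrand_upper_bound_general
    {V : Type*} [Fintype V] [DecidableEq V] (G : SimpleGraph V) [DecidableRel G.Adj]
    (n e j l : ℕ) (hn : n = Fintype.card V) (he : e = G.edgeFinset.card)
    (hjlt : ∑ t ∈ Finset.range j, (n - t) < e)
    (hjle : e ≤ ∑ t ∈ Finset.range (j + 1), (n - t))
    (hl : l = e - ∑ t ∈ Finset.range j, (n - t)) (i : ℕ) :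
    linStrand G i ≤
      (∑ s ∈ Finset.Icc 1 j, ∑ u ∈ Finset.Icc s n, (u - 1).choose i)
        + ∑ u ∈ Finset.Icc (j + 1) (j + l), (u - 1).choose i := by
  obtain ⟨d, hd, hde, hlin⟩ := LinStrand.exists_isGreedyUpDegrees G
  subst hn he hl
  calc linStrand G i
      ≤ ∑ s ∈ range (Fintype.card V), ∑ k ∈ range (d s), (s + k).choose i := hlin i
    _ ≤ ∑ s ∈ range (Fintype.card V),
          ∑ k ∈ range (LinStrand.lexBlock (Fintype.card V) #G.edgeFinset s), (s + k).choose i := by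
        simpa only [hde] using LinStrand.sum_stairs_le_sum_lexStairs (Nat.choose_mono i) hd
    _ = _ := LinStrand.sum_lexStairs_eq (fun u => u.choose i) hjlt hjle

/-- Let `G` be a finite simple graph with `n` vertices and `e ≥ 1` edges, and let `j, l`
be the integers with `Σ_{t=0}^{j−1}(n−t) < e ≤ Σ_{t=0}^{j}(n−t)` and
`l = e − Σ_{t=0}^{j−1}(n−t)`.  Then for every `i ≥ 0`,
`B_i(G) ≤ Σ_{s=1}^{j} Σ_{u=s}^{n} C(u−1, i) + Σ_{u=j+1}^{j+l} C(u−1, i)`. -/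
theorem linStrand_upper_bound
    {V : Type*} [Fintype V] [DecidableEq V] (G : SimpleGraph V) [DecidableRel G.Adj]
    (n e j l : ℕ) (hn : n = Fintype.card V) (he : e = G.edgeFinset.card) (he1 : 1 ≤ e)
    (hjlt : ∑ t ∈ Finset.range j, (n - t) < e)
    (hjle : e ≤ ∑ t ∈ Finset.range (j + 1), (n - t))
    (hl : l = e - ∑ t ∈ Finset.range j, (n - t)) (i : ℕ) :
    linStrand G i ≤
      (∑ s ∈ Finset.Icc 1 j, ∑ u ∈ Finset.Icc s n, (u - 1).choose i)
        + ∑ u ∈ Finset.Icc (j + 1) (j + l), (u - 1).choose i :=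
  linStrand_upper_bound_general G n e j l hn he hjlt hjle hl i
end

section
/- Let G be a finite simple graph with no induced 4-cycle, i.e., there is no 4-element subset of the vertices whose induced subgraph is isomorphic to the cycle C_4. Then for every subset S of the vertices of G, at most one connected component of the complement Ḡ[S] of the induced subgraph G[S] contains an edge; equivalently, Ḡ[S] has at most one connected component with more than one vertex. -/
/-- If a finite simple graph `G` has no induced 4-cycle, then for every subset `S`
of the vertices, at most one connected component of the complement of the induced
subgraph `G[S]` contains an edge: any two edges of `(G[S])ᶜ` lie in the same
connected component. -/
theorem at_most_one_component_with_edge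
    {V : Type*} [Fintype V] [DecidableEq V] (G : SimpleGraph V)
    (h4 : ∀ S : Finset V, S.card = 4 →
      ¬ Nonempty (G.induce (S : Set V) ≃g SimpleGraph.cycleGraph 4)) :
    ∀ (S : Set V) (u v u' v' : S),
      (G.induce S)ᶜ.Adj u v → (G.induce S)ᶜ.Adj u' v' →
        (G.induce S)ᶜ.Reachable u u' := by
  intro S u v u' v' huv hu'v'
  by_contra hr
  -- basic reachability facts
  have huv' : (G.induce S)ᶜ.Reachable u v := huv.reachable
  have hu'v'' : (G.induce S)ᶜ.Reachable u' v' := hu'v'.reachable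
  -- no complement-edges between {u,v} and {u',v'}
  have nadj : ∀ a b : S, (G.induce S)ᶜ.Reachable u a →
      (G.induce S)ᶜ.Reachable u' b → ¬ (G.induce S)ᶜ.Adj a b := by
    intro a b ha hb hab
    exact hr (ha.trans (hab.reachable.trans hb.symm))
  have key : ∀ a b : S, (G.induce S)ᶜ.Reachable u a →
      (G.induce S)ᶜ.Reachable u' b → a ≠ b ∧ G.Adj a.1 b.1 := by
    intro a b ha hb
    have hne : a ≠ b := by
      rintro rfl; exact hr (ha.trans hb.symm)
    refine ⟨hne, ?_⟩
    by_contra hna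
    exact nadj a b ha hb ((G.induce S)ᶜ.adj_symm ((G.induce S)ᶜ.adj_symm
      ⟨hne, fun h => hna h⟩))
  obtain ⟨huu', hAuu'⟩ := key u u' (SimpleGraph.Reachable.refl u) (SimpleGraph.Reachable.refl u')
  obtain ⟨huv'2, hAuv'⟩ := key u v' (SimpleGraph.Reachable.refl u) hu'v''
  obtain ⟨hvu', hAvu'⟩ := key v u' huv' (SimpleGraph.Reachable.refl u')
  obtain ⟨hvv', hAvv'⟩ := key v v' huv' hu'v''
  -- non-adjacencies in G
  have huvne : u ≠ v := huv.ne
  have hu'v'ne : u' ≠ v' := hu'v'.ne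
  have hnAuv : ¬ G.Adj u.1 v.1 := by
    have := huv
    simp only [SimpleGraph.compl_adj, SimpleGraph.comap_adj] at this
    exact this.2
  have hnAu'v' : ¬ G.Adj u'.1 v'.1 := by
    have := hu'v'
    simp only [SimpleGraph.compl_adj, SimpleGraph.comap_adj] at this
    exact this.2
  -- the four vertices
  set a := u.1 with ha
  set b := u'.1 with hb
  set c := v.1 with hc
  set d := v'.1 with hd
  have hab : a ≠ b := Subtype.coe_ne_coe.mpr huu'
  have hac : a ≠ c := Subtype.coe_ne_coe.mpr huvne
  have had : a ≠ d := Subtype.coe_ne_coe.mpr huv'2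
  have hbc : b ≠ c := (Subtype.coe_ne_coe.mpr hvu').symm
  have hbd : b ≠ d := Subtype.coe_ne_coe.mpr hu'v'ne
  have hcd : c ≠ d := Subtype.coe_ne_coe.mpr hvv'
  set T : Finset V := {a, b, c, d} with hT
  have hcard : T.card = 4 := by
    rw [hT]
    rw [Finset.card_insert_of_notMem (by simp [hab, hac, had]),
      Finset.card_insert_of_notMem (by simp [hbc, hbd]),
      Finset.card_insert_of_notMem (by simp [hcd]), Finset.card_singleton]
  apply h4 T hcard
  -- build the isomorphism from cycleGraph 4
  have hmem : ∀ x ∈ ({a, b, c, d} : Finset V), x ∈ (T : Set V) := by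
    intro x hx; simpa [hT] using hx
  let f : Fin 4 → (T : Set V) :=
    fun i => match i with
    | 0 => ⟨a, by simp [hT]⟩
    | 1 => ⟨b, by simp [hT]⟩
    | 2 => ⟨c, by simp [hT]⟩
    | 3 => ⟨d, by simp [hT]⟩
  have hfinj : Function.Injective f := by
    intro i j hij
    have hval := congrArg Subtype.val hij
    fin_cases i <;> fin_cases j <;> simp only [f] at hval <;>
      first
        | rfl
        | exact absurd hval hab | exact absurd hval hac | exact absurd hval had
        | exact absurd hval hbc | exact absurd hval hbd | exact absurd hval hcd
        | exact absurd hval.symm hab | exact absurd hval.symm hac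
        | exact absurd hval.symm had | exact absurd hval.symm hbc
        | exact absurd hval.symm hbd | exact absurd hval.symm hcd
  have hcardT : Fintype.card (T : Set V) = 4 := by
    simpa using hcard
  have hfbij : Function.Bijective f := by
    rw [Fintype.bijective_iff_injective_and_card]
    exact ⟨hfinj, by rw [hcardT]; rfl⟩
  let e : Fin 4 ≃ (T : Set V) := Equiv.ofBijective f hfbij
  refine ⟨SimpleGraph.Iso.symm ⟨e, ?_⟩⟩
  intro i j
  show (G.induce (T : Set V)).Adj (f i) (f j) ↔ (SimpleGraph.cycleGraph 4).Adj i j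
  rw [Iff.comm]
  have hA : (SimpleGraph.cycleGraph 4).Adj i j ↔ i - j = 1 ∨ j - i = 1 :=
    SimpleGraph.cycleGraph_adj
  fin_cases i <;> fin_cases j <;>
    simp only [f, hA, SimpleGraph.comap_adj, Function.Embedding.coe_subtype] <;>
    first
      | (simp only [iff_true_intro hAuu', iff_true_intro hAuv', iff_true_intro hAvu',
          iff_true_intro hAvv', iff_true_intro (G.adj_symm hAuu'),
          iff_true_intro (G.adj_symm hAuv'), iff_true_intro (G.adj_symm hAvu'),
          iff_true_intro (G.adj_symm hAvv'), iff_true, iff_false_intro hnAuv,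
          iff_false_intro hnAu'v', iff_false_intro (fun h => hnAuv (G.adj_symm h)),
          iff_false_intro (fun h => hnAu'v' (G.adj_symm h)),
          iff_false_intro (G.irrefl), iff_false] <;> decide)
end

section
/- Let G be a finite simple graph on vertex set V and let i ≥ 0 be an integer. Then Σ over subsets S ⊆ V with |S| = i+2 of ι(Ḡ[S]) = Σ_{v ∈ V} C(deg v, i+1), where ι(Ḡ[S]) denotes the number of isolated vertices of the complement Ḡ[S] of the induced subgraph G[S]. -/
/-!
Double counting: both sides count the pairs `(S, v)` with `|S| = i + 2`, `v ∈ S` and `v`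
adjacent to every other vertex of `S`. For a fixed `v` these `S` are exactly the sets
`insert v T` with `T` an `(i + 1)`-subset of the neighbourhood of `v`.
-/

open Finset

noncomputable def numIsolated {α : Type*} (H : SimpleGraph α) : ℕ :=
  Nat.card {w : α | ∀ u : α, ¬ H.Adj w u}

section
variable {α : Type*} [Fintype α] [DecidableEq α]

theorem filter_powersetCard_succ_eq_image_insert {s : Finset α} {v : α} (hv : v ∉ s) (k : ℕ) :
    {T ∈ powersetCard (k + 1) (univ : Finset α) | v ∈ T ∧ T.erase v ⊆ s} =
      (powersetCard k s).image (insert v) := by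
  ext T
  simp only [mem_filter, mem_powersetCard, mem_image, subset_univ, true_and]
  constructor
  · rintro ⟨hcard, hvT, hsub⟩
    exact ⟨T.erase v, ⟨hsub, by rw [card_erase_of_mem hvT, hcard, Nat.add_sub_cancel]⟩,
      insert_erase hvT⟩
  · rintro ⟨U, ⟨hUs, hcard⟩, rfl⟩
    have hvU : v ∉ U := fun h => hv (hUs h)
    exact ⟨by rw [card_insert_of_notMem hvU, hcard], mem_insert_self v U, by rwa [erase_insert hvU]⟩

theorem card_filter_powersetCard_succ_eq_choose {s : Finset α} {v : α} (hv : v ∉ s) (k : ℕ) :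
    #{T ∈ powersetCard (k + 1) (univ : Finset α) | v ∈ T ∧ T.erase v ⊆ s} = (#s).choose k := by
  rw [filter_powersetCard_succ_eq_image_insert hv, card_image_of_injOn, card_powersetCard]
  intro U₁ hU₁ U₂ hU₂ h
  have hv₁ : v ∉ U₁ := fun h' => hv ((mem_powersetCard.1 hU₁).1 h')
  have hv₂ : v ∉ U₂ := fun h' => hv ((mem_powersetCard.1 hU₂).1 h')
  rw [← erase_insert hv₁, ← erase_insert hv₂]
  exact congrArg (·.erase v) h

end

theorem numIsolated_compl_induce {V : Type*} [Fintype V] [DecidableEq V] (G : SimpleGraph V)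
    [DecidableRel G.Adj] (S : Finset V) :
    numIsolated (G.induce (S : Set V))ᶜ = #{v | v ∈ S ∧ S.erase v ⊆ G.neighborFinset v} := by
  rw [numIsolated, ← Nat.card_eq_finsetCard]
  refine Nat.card_congr ((Equiv.subtypeSubtypeEquivSubtypeExists _ _).trans
    (Equiv.subtypeEquivRight fun v => ?_))
  simp only [Set.mem_ofPred_eq, SimpleGraph.compl_adj, SimpleGraph.comap_adj,
    Function.Embedding.coe_subtype, ne_eq, not_and, not_not, Subtype.forall, Subtype.mk.injEq,
    mem_coe, exists_prop, mem_filter, mem_univ, true_and, subset_iff, mem_erase,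
    SimpleGraph.mem_neighborFinset]
  exact and_congr_right fun _ =>
    ⟨fun h u hu => h u hu.2 (Ne.symm hu.1), fun h u hu hvu => h ⟨Ne.symm hvu, hu⟩⟩

theorem sum_isolated_complement_general
    {V : Type*} [Fintype V] (G : SimpleGraph V) [DecidableRel G.Adj]
    (i : ℕ) :
    ∑ S ∈ (Finset.univ : Finset V).powersetCard (i + 2),
        numIsolated ((G.induce (S : Set V))ᶜ) =
      ∑ v : V, (G.degree v).choose (i + 1) := by
  classical
  calc ∑ S ∈ powersetCard (i + 2) univ, numIsolated (G.induce (S : Set V))ᶜ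
      = ∑ S ∈ powersetCard (i + 2) univ, #{v | v ∈ S ∧ S.erase v ⊆ G.neighborFinset v} :=
        sum_congr rfl fun S _ => numIsolated_compl_induce G S
    _ = ∑ v, #{S ∈ powersetCard (i + 2) univ | v ∈ S ∧ S.erase v ⊆ G.neighborFinset v} :=
        sum_card_bipartiteAbove_eq_sum_card_bipartiteBelow _
    _ = ∑ v, (G.degree v).choose (i + 1) := sum_congr rfl fun v _ => by
        rw [card_filter_powersetCard_succ_eq_choose (G.notMem_neighborFinset_self v),
          G.card_neighborFinset_eq_degree]

/-- For a finite simple graph `G` and `i ≥ 0`,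
`Σ_{S ⊆ V, |S| = i+2} ι((G[S])ᶜ) = Σ_{v ∈ V} C(deg v, i+1)`,
where `ι` denotes the number of isolated vertices. -/
theorem sum_isolated_complement
    {V : Type*} [Fintype V] [DecidableEq V] (G : SimpleGraph V) [DecidableRel G.Adj]
    (i : ℕ) :
    ∑ S ∈ (Finset.univ : Finset V).powersetCard (i + 2),
        numIsolated ((G.induce (S : Set V))ᶜ) =
      ∑ v : V, (G.degree v).choose (i + 1) :=
  sum_isolated_complement_general G i
end
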